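/- arXiv:1903.09042 — 3 statements merged into one kernel-verified Lean document; each statement's English description precedes it below -/
import Mathlib

section
/- Let 1<α≤2 and λ∈ℝ. There exist constants C₁, C₂ ∈ ℝ, not both zero, such that the function u(t)=C₁ t^{α−1} E_{α,α}(λ t^α)+C₂ t^{α−2} E_{α,α−1}(λ t^α) satisfies lim_{t→0⁺} t^{2−α} u(t)=0 and u'(1)=0, if and only if E_{α,α−1}(λ)=0. -/
/-- The two-parameter Mittag-Leffler function `E_{α,β}(x) = ∑_{k=0}^∞ x^k / Γ(αk+β)`. -/
noncomputable def ML (α β x : ℝ) : ℝ := ∑' k : ℕ, x ^ k / Real.Gamma (α * k + β)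

/-- Termwise derivative series of `ML`. -/
noncomputable def Dml (α β x : ℝ) : ℝ :=
  ∑' k : ℕ, (k : ℝ) * x ^ (k - 1) / Real.Gamma (α * k + β)

lemma Gamma_arg_pos {α β : ℝ} (hα : 1 < α) (hβ : 0 < β) (k : ℕ) :
    0 < α * k + β := by
  have : (0:ℝ) ≤ α * k := by positivity
  linarith

lemma ml_summable_aux {α β : ℝ} (hα : 1 < α) (hβ : 0 < β) (r : ℝ) (hr : 0 ≤ r) :
    Summable (fun k : ℕ => ((k : ℝ) + 1) * r ^ k / Real.Gamma (α * k + β)) := by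
  have hα' : (0:ℝ) < α - 1 := by linarith
  obtain ⟨N, hN⟩ := exists_nat_ge ((2 - β) / (α - 1))
  have hs : Summable (fun k : ℕ => r ^ k / (Nat.factorial k : ℝ)) :=
    Real.summable_pow_div_factorial r
  apply summable_of_isBigO_nat hs
  apply Asymptotics.IsBigO.of_bound 1
  filter_upwards [Filter.eventually_ge_atTop N] with k hk
  have hkc : ((2:ℝ) - β) / (α - 1) ≤ k := le_trans hN (by exact_mod_cast hk)
  have hk' : (2:ℝ) - β ≤ (α - 1) * k := by
    rw [div_le_iff₀ hα'] at hkc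
    nlinarith [hkc]
  have h2 : (k:ℝ) + 2 ≤ α * k + β := by nlinarith
  have hkn : (0:ℝ) ≤ (k:ℝ) := Nat.cast_nonneg k
  have hg1 : Real.Gamma ((k:ℝ) + 2) ≤ Real.Gamma (α * k + β) := by
    rcases eq_or_lt_of_le h2 with h | h
    · rw [h]
    · exact le_of_lt (Real.Gamma_strictMonoOn_Ici (by simp only [Set.mem_Ici]; linarith)
        (by simp only [Set.mem_Ici]; linarith) h)
  have hfact : Real.Gamma ((k:ℝ) + 2) = (Nat.factorial (k+1) : ℝ) := by
    rw [show ((k:ℝ) + 2) = ((k+1:ℕ):ℝ) + 1 by push_cast; ring,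
      Real.Gamma_nat_eq_factorial]
  have hfp : (0:ℝ) < (Nat.factorial (k+1) : ℝ) := by positivity
  have hgp : (0:ℝ) < Real.Gamma (α * k + β) := Real.Gamma_pos_of_pos (Gamma_arg_pos hα hβ k)
  have hnum : (0:ℝ) ≤ ((k:ℝ) + 1) * r ^ k := by positivity
  have hle : ((k:ℝ) + 1) * r ^ k / Real.Gamma (α * k + β)
      ≤ ((k:ℝ) + 1) * r ^ k / (Nat.factorial (k+1) : ℝ) := by
    apply div_le_div_of_nonneg_left hnum hfp
    rw [← hfact]; exact hg1
  have heq : ((k:ℝ) + 1) * r ^ k / (Nat.factorial (k+1) : ℝ) = r ^ k / (Nat.factorial k : ℝ) := by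
    rw [Nat.factorial_succ]
    push_cast
    have hkf : (0:ℝ) < (Nat.factorial k : ℝ) := by positivity
    field_simp
  rw [Real.norm_eq_abs, Real.norm_eq_abs, abs_of_nonneg (by positivity),
    abs_of_nonneg (by positivity), one_mul]
  calc ((k:ℝ) + 1) * r ^ k / Real.Gamma (α * k + β)
      ≤ ((k:ℝ) + 1) * r ^ k / (Nat.factorial (k+1) : ℝ) := hle
    _ = r ^ k / (Nat.factorial k : ℝ) := heq

lemma ml_summable {α β : ℝ} (hα : 1 < α) (hβ : 0 < β) (x : ℝ) :
    Summable (fun k : ℕ => x ^ k / Real.Gamma (α * k + β)) := by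
  apply Summable.of_norm_bounded (ml_summable_aux hα hβ |x| (abs_nonneg x))
  intro k
  have hgp : (0:ℝ) < Real.Gamma (α * k + β) := Real.Gamma_pos_of_pos (Gamma_arg_pos hα hβ k)
  rw [Real.norm_eq_abs, abs_div, abs_of_pos hgp, abs_pow]
  have hpk : (0:ℝ) ≤ |x| ^ k := pow_nonneg (abs_nonneg x) k
  have hk0 : (0:ℝ) ≤ (k:ℝ) := Nat.cast_nonneg k
  rw [div_le_div_iff₀ hgp hgp]
  nlinarith [mul_nonneg (mul_nonneg hk0 hpk) hgp.le]

lemma ml_hasDerivAt {α β : ℝ} (hα : 1 < α) (hβ : 0 < β) (x : ℝ) :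
    HasDerivAt (ML α β) (Dml α β x) x := by
  set R : ℝ := |x| + 1 with hR
  have hR1 : (1:ℝ) ≤ R := by rw [hR]; linarith [abs_nonneg x]
  have hR0 : (0:ℝ) ≤ R := by linarith
  have hu : Summable (fun k : ℕ => ((k : ℝ) + 1) * R ^ k / Real.Gamma (α * k + β)) :=
    ml_summable_aux hα hβ R hR0
  have hx : x ∈ Metric.ball (0:ℝ) R := by
    rw [Metric.mem_ball, Real.dist_eq, sub_zero, hR]
    linarith [abs_nonneg x]
  have hg : ∀ (k : ℕ) (y : ℝ), y ∈ Metric.ball (0:ℝ) R →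
      HasDerivAt (fun y : ℝ => y ^ k / Real.Gamma (α * k + β))
        ((k : ℝ) * y ^ (k - 1) / Real.Gamma (α * k + β)) y :=
    fun k y _ => (hasDerivAt_pow k y).div_const _
  have hg' : ∀ (k : ℕ) (y : ℝ), y ∈ Metric.ball (0:ℝ) R →
      ‖(k : ℝ) * y ^ (k - 1) / Real.Gamma (α * k + β)‖
        ≤ ((k : ℝ) + 1) * R ^ k / Real.Gamma (α * k + β) := by
    intro k y hy
    have hgp : (0:ℝ) < Real.Gamma (α * k + β) := Real.Gamma_pos_of_pos (Gamma_arg_pos hα hβ k)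
    have hyR : |y| < R := by simpa [Real.dist_eq] using hy
    rw [Real.norm_eq_abs, abs_div, abs_of_pos hgp, abs_mul, abs_pow, Nat.abs_cast]
    have h1 : |y| ^ (k - 1) ≤ R ^ (k - 1) :=
      pow_le_pow_left₀ (abs_nonneg y) hyR.le _
    have h2 : R ^ (k - 1) ≤ R ^ k := pow_le_pow_right₀ hR1 (Nat.sub_le k 1)
    have h3 : (k : ℝ) * |y| ^ (k - 1) ≤ ((k : ℝ) + 1) * R ^ k := by
      have hk0 : (0:ℝ) ≤ (k:ℝ) := Nat.cast_nonneg k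
      nlinarith [pow_nonneg hR0 k, pow_nonneg (abs_nonneg y) (k-1), pow_nonneg hR0 (k-1)]
    rw [div_le_div_iff₀ hgp hgp]
    nlinarith [hgp]
  show HasDerivAt (fun z : ℝ => ∑' k : ℕ, z ^ k / Real.Gamma (α * k + β))
    (∑' k : ℕ, (k : ℝ) * x ^ (k - 1) / Real.Gamma (α * k + β)) x
  exact hasDerivAt_tsum_of_isPreconnected hu Metric.isOpen_ball
    (convex_ball (0:ℝ) R).isPreconnected hg hg' hx (ml_summable hα hβ x) hx

lemma ml_zero {α β : ℝ} (hβ : 0 < β) : ML α β 0 = 1 / Real.Gamma β := by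
  rw [ML, tsum_eq_single 0]
  · simp
  · intro k hk
    simp [zero_pow hk]

lemma ml_identity {α : ℝ} (hα : 1 < α) (x : ℝ) :
    (α - 1) * ML α α x + α * x * Dml α α x = ML α (α - 1) x := by
  have hβ : (0:ℝ) < α := by linarith
  have hsum0 : Summable (fun k : ℕ => x ^ k / Real.Gamma (α * k + α)) := ml_summable hα hβ x
  have hsum1 : Summable (fun k : ℕ => (α - 1) * (x ^ k / Real.Gamma (α * k + α))) :=
    hsum0.mul_left _
  have hsum2 : Summable (fun k : ℕ => α * k * x ^ k / Real.Gamma (α * k + α)) := by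
    apply Summable.of_norm_bounded ((ml_summable_aux hα hβ |x| (abs_nonneg x)).mul_left |α|)
    intro k
    have hgp : (0:ℝ) < Real.Gamma (α * k + α) := Real.Gamma_pos_of_pos (Gamma_arg_pos hα hβ k)
    rw [Real.norm_eq_abs, abs_div, abs_of_pos hgp, abs_mul, abs_mul, Nat.abs_cast, abs_pow]
    have hpk : (0:ℝ) ≤ |x| ^ k := pow_nonneg (abs_nonneg x) k
    have hk0 : (0:ℝ) ≤ (k:ℝ) := Nat.cast_nonneg k
    have hmain : (k:ℝ) * |x| ^ k / Real.Gamma (α * k + α)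
        ≤ ((k:ℝ) + 1) * |x| ^ k / Real.Gamma (α * k + α) := by
      rw [div_le_div_iff₀ hgp hgp]
      nlinarith [mul_nonneg hpk hgp.le]
    rw [show |α| * (k:ℝ) * |x| ^ k / Real.Gamma (α * k + α)
        = |α| * ((k:ℝ) * |x| ^ k / Real.Gamma (α * k + α)) from by ring]
    exact mul_le_mul_of_nonneg_left hmain (abs_nonneg α)
  have h2 : α * x * Dml α α x = ∑' k : ℕ, α * k * x ^ k / Real.Gamma (α * k + α) := by
    rw [Dml, ← tsum_mul_left]
    apply tsum_congr
    intro k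
    cases k with
    | zero => simp
    | succ n =>
      simp only [Nat.add_sub_cancel]
      push_cast
      rw [pow_succ]
      ring
  have h1 : (α - 1) * ML α α x = ∑' k : ℕ, (α - 1) * (x ^ k / Real.Gamma (α * k + α)) := by
    rw [ML, ← tsum_mul_left]
  rw [h1, h2, ← Summable.tsum_add hsum1 hsum2, ML]
  apply tsum_congr
  intro k
  have hpos : (0:ℝ) < α * k + α - 1 := by
    have : (0:ℝ) ≤ α * k := by positivity
    linarith
  have hne : α * k + α - 1 ≠ 0 := ne_of_gt hpos
  have hrec : Real.Gamma (α * k + α) = (α * k + α - 1) * Real.Gamma (α * k + α - 1) := by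
    have h := Real.Gamma_add_one hne
    rw [show α * (k:ℝ) + α - 1 + 1 = α * k + α by ring] at h
    exact h
  have hg1 : Real.Gamma (α * k + α - 1) ≠ 0 :=
    ne_of_gt (Real.Gamma_pos_of_pos hpos)
  have hg2 : Real.Gamma (α * k + α) ≠ 0 := by
    rw [hrec]; exact mul_ne_zero hne hg1
  have hGeq : Real.Gamma (α * k + (α - 1)) = Real.Gamma (α * k + α - 1) := by
    congr 1; ring
  rw [hGeq, hrec]
  rw [mul_div_assoc', ← add_div, div_eq_div_iff (mul_ne_zero hne hg1) hg1]
  ring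

lemma ml_tendsto_aux {α : ℝ} (hα : 1 < α) (hα2 : α ≤ 2) (lam C₁ C₂ : ℝ) :
    Filter.Tendsto
      (fun t : ℝ => t ^ (2 - α) *
        (C₁ * t ^ (α - 1) * ML α α (lam * t ^ α) +
         C₂ * t ^ (α - 2) * ML α (α - 1) (lam * t ^ α)))
      (nhdsWithin 0 (Set.Ioi 0)) (nhds (C₂ * ML α (α - 1) 0)) := by
  have hβ1 : (0:ℝ) < α := by linarith
  have hβ2 : (0:ℝ) < α - 1 := by linarith
  have hcont1 : ContinuousAt (ML α α) 0 :=
    (ml_hasDerivAt hα hβ1 0).differentiableAt.continuousAt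
  have hcont2 : ContinuousAt (ML α (α - 1)) 0 :=
    (ml_hasDerivAt hα hβ2 0).differentiableAt.continuousAt
  have hrp : ContinuousAt (fun t : ℝ => lam * t ^ α) 0 :=
    (continuousAt_const).mul (Real.continuousAt_rpow_const 0 α (Or.inr hβ1.le))
  have hval : lam * (0:ℝ) ^ α = 0 := by
    rw [Real.zero_rpow (ne_of_gt hβ1)]; ring
  have htend : Filter.Tendsto (fun t : ℝ => lam * t ^ α) (nhds 0) (nhds 0) := by
    have h0 := (Real.continuousAt_rpow_const 0 α (Or.inr hβ1.le)).tendsto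
    rw [Real.zero_rpow (ne_of_gt hβ1)] at h0
    have := Filter.Tendsto.const_mul lam h0
    simpa using this
  have hA : Filter.Tendsto (fun t : ℝ => ML α α (lam * t ^ α)) (nhds 0)
      (nhds (ML α α 0)) := hcont1.tendsto.comp htend
  have hB : Filter.Tendsto (fun t : ℝ => ML α (α - 1) (lam * t ^ α)) (nhds 0)
      (nhds (ML α (α - 1) 0)) := hcont2.tendsto.comp htend
  have hG : Filter.Tendsto
      (fun t : ℝ => C₁ * t * ML α α (lam * t ^ α) + C₂ * ML α (α - 1) (lam * t ^ α))
      (nhdsWithin 0 (Set.Ioi 0)) (nhds (C₂ * ML α (α - 1) 0)) := by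
    have h1 : Filter.Tendsto (fun t : ℝ => C₁ * t) (nhds 0) (nhds (C₁ * 0)) :=
      (continuousAt_const.mul continuousAt_id).tendsto
    have h2 := (h1.mul hA).add ((tendsto_const_nhds (x := C₂)).mul hB)
    have h3 : C₁ * 0 * ML α α 0 + C₂ * ML α (α - 1) 0 = C₂ * ML α (α - 1) 0 := by ring
    rw [h3] at h2
    exact h2.mono_left nhdsWithin_le_nhds
  apply hG.congr'
  filter_upwards [self_mem_nhdsWithin] with t ht
  have ht0 : (0:ℝ) < t := ht
  have e1 : t ^ (2 - α) * t ^ (α - 1) = t := by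
    rw [← Real.rpow_add ht0, show (2 - α) + (α - 1) = 1 by ring, Real.rpow_one]
  have e2 : t ^ (2 - α) * t ^ (α - 2) = 1 := by
    rw [← Real.rpow_add ht0, show (2 - α) + (α - 2) = 0 by ring, Real.rpow_zero]
  calc C₁ * t * ML α α (lam * t ^ α) + C₂ * ML α (α - 1) (lam * t ^ α)
      = C₁ * (t ^ (2 - α) * t ^ (α - 1)) * ML α α (lam * t ^ α)
        + C₂ * (t ^ (2 - α) * t ^ (α - 2)) * ML α (α - 1) (lam * t ^ α) := by
        rw [e1, e2]; ring
    _ = t ^ (2 - α) * (C₁ * t ^ (α - 1) * ML α α (lam * t ^ α)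
        + C₂ * t ^ (α - 2) * ML α (α - 1) (lam * t ^ α)) := by ring

lemma ml_hasDerivAt_one {α : ℝ} (hα : 1 < α) (lam C₁ : ℝ) :
    HasDerivAt (fun t : ℝ => C₁ * t ^ (α - 1) * ML α α (lam * t ^ α))
      (C₁ * ML α (α - 1) lam) 1 := by
  have hβ1 : (0:ℝ) < α := by linarith
  have hr1 : HasDerivAt (fun t : ℝ => t ^ (α - 1)) ((α - 1) * (1:ℝ) ^ (α - 1 - 1)) 1 :=
    Real.hasDerivAt_rpow_const (Or.inl one_ne_zero)
  have hr2 : HasDerivAt (fun t : ℝ => t ^ α) (α * (1:ℝ) ^ (α - 1)) 1 :=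
    Real.hasDerivAt_rpow_const (Or.inl one_ne_zero)
  have h2 : HasDerivAt (fun t : ℝ => lam * t ^ α) (lam * (α * (1:ℝ) ^ (α - 1))) 1 :=
    hr2.const_mul lam
  have h3 : HasDerivAt (ML α α) (Dml α α lam) ((fun t : ℝ => lam * t ^ α) 1) := by
    simpa [Real.one_rpow] using ml_hasDerivAt hα hβ1 lam
  have key : HasDerivAt (fun t : ℝ => ML α α (lam * t ^ α))
      (Dml α α lam * (lam * (α * (1:ℝ) ^ (α - 1)))) 1 := by
    simpa [Function.comp_def] using HasDerivAt.comp 1 h3 h2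
  have hmul := (hr1.mul key).const_mul C₁
  have hE := ml_identity hα lam
  have hveq : C₁ * ((α - 1) * (1:ℝ) ^ (α - 1 - 1) * ML α α (lam * (1:ℝ) ^ α)
      + (1:ℝ) ^ (α - 1) * (Dml α α lam * (lam * (α * (1:ℝ) ^ (α - 1)))))
      = C₁ * ML α (α - 1) lam := by
    simp only [Real.one_rpow, mul_one, one_mul]
    linear_combination C₁ * hE
  have hfun : (fun y : ℝ => C₁ * ((fun t : ℝ => t ^ (α - 1)) * fun t : ℝ => ML α α (lam * t ^ α)) y)
      = (fun t : ℝ => C₁ * t ^ (α - 1) * ML α α (lam * t ^ α)) := by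
    funext t; simp only [Pi.mul_apply]; ring
  rw [hfun] at hmul
  exact hmul.congr_deriv hveq

/-- For `1 < α ≤ 2` and `λ ∈ ℝ`: there exist constants `C₁, C₂`, not both zero, such that
`u(t) = C₁ t^{α-1} E_{α,α}(λ t^α) + C₂ t^{α-2} E_{α,α-1}(λ t^α)` satisfies
`lim_{t→0⁺} t^{2-α} u(t) = 0` and `u'(1) = 0`, if and only if `E_{α,α-1}(λ) = 0`. -/
theorem stmt1 (α lam : ℝ) (hα1 : 1 < α) (hα2 : α ≤ 2) :
    (∃ C₁ C₂ : ℝ, ¬(C₁ = 0 ∧ C₂ = 0) ∧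
      Filter.Tendsto
        (fun t : ℝ => t ^ (2 - α) *
          (C₁ * t ^ (α - 1) * ML α α (lam * t ^ α) +
           C₂ * t ^ (α - 2) * ML α (α - 1) (lam * t ^ α)))
        (nhdsWithin 0 (Set.Ioi 0)) (nhds 0) ∧
      deriv
        (fun t : ℝ =>
          C₁ * t ^ (α - 1) * ML α α (lam * t ^ α) +
          C₂ * t ^ (α - 2) * ML α (α - 1) (lam * t ^ α)) 1 = 0) ↔
    ML α (α - 1) lam = 0 := by
  have hβ2 : (0:ℝ) < α - 1 := by linarith
  have hg : (0:ℝ) < Real.Gamma (α - 1) := Real.Gamma_pos_of_pos hβ2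
  have hml0 : ML α (α - 1) 0 = 1 / Real.Gamma (α - 1) := ml_zero hβ2
  constructor
  · rintro ⟨C₁, C₂, hne, hlim, hder⟩
    have h2 := ml_tendsto_aux hα1 hα2 lam C₁ C₂
    have huniq : (0:ℝ) = C₂ * ML α (α - 1) 0 := tendsto_nhds_unique hlim h2
    have hC₂ : C₂ = 0 := by
      rw [hml0] at huniq
      field_simp at huniq
      simpa using huniq.symm
    subst hC₂
    have hC₁ : C₁ ≠ 0 := by tauto
    simp only [zero_mul, add_zero] at hder
    rw [(ml_hasDerivAt_one hα1 lam C₁).deriv] at hder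
    rcases mul_eq_zero.mp hder with h | h
    · exact absurd h hC₁
    · exact h
  · intro h
    refine ⟨1, 0, by simp, ?_, ?_⟩
    · have h2 := ml_tendsto_aux hα1 hα2 lam 1 0
      simpa using h2
    · simp only [zero_mul, add_zero]
      rw [(ml_hasDerivAt_one hα1 lam 1).deriv, h, mul_zero]
end

section
/- Let 1<α≤2 and λ∈ℝ with E_{α,α−1}(λ)≠0, and let G be the associated Green's function. Then (i) G is continuous on I×[0,1), where I=[0,1]; and (ii) G(0,s)=0 for all s∈[0,1), G(t,0)=0 for all t∈I, and the partial derivative ∂G(t,s)/∂t evaluated at t=1 equals 0 for every s∈[0,1). -/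
/-- The Green's function of the mixed problem
`D^α u - λ u + y = 0`, `lim_{t→0⁺} t^{2-α}u(t) = 0`, `u'(1) = 0`. -/
noncomputable def greenG (α lam : ℝ) (t s : ℝ) : ℝ :=
  if s ≤ t then
    t ^ (α - 1) * ML α α (lam * t ^ α) * ML α (α - 1) (lam * (1 - s) ^ α) /
      ((1 - s) ^ (2 - α) * ML α (α - 1) lam) -
    (t - s) ^ (α - 1) * ML α α (lam * (t - s) ^ α)
  else
    t ^ (α - 1) * ML α α (lam * t ^ α) * ML α (α - 1) (lam * (1 - s) ^ α) /
      ((1 - s) ^ (2 - α) * ML α (α - 1) lam)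

/-!
With `K(x) = x^(α-1) E_{α,α}(λ x^α)` one has `G(t,s) = K(t) c(s) - K(max (t-s) 0)` for all `t, s`,
since `0^(α-1) = 0` kills the second term when `t < s`; this gives continuity and the two vanishing
identities at once. Differentiating `K(x) = ∑ λⁿ x^(αn+α-1) / Γ(αn+α)` termwise and using
`Γ(z+1) = z Γ(z)` gives `K'(x) = x^(α-2) E_{α,α-1}(λ x^α)`, and `c(s)` is exactly the factor for
which `K'(1) c(s) = K'(1-s)`.
-/

open Real Filter Set Topology

lemma Gamma_mul_natCast_add_pos {a b : ℝ} (ha : 0 ≤ a) (hb : 0 < b) (n : ℕ) :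
    0 < Gamma (a * n + b) :=
  Gamma_pos_of_pos (by positivity)

lemma Gamma_add_one_le_Gamma_add {y a : ℝ} (hy : 1 ≤ y) (ha : 1 ≤ a) :
    Gamma (y + 1) ≤ Gamma (y + a) :=
  Gamma_strictMonoOn_Ici.monotoneOn (by simp only [mem_Ici]; linarith)
    (by simp only [mem_Ici]; linarith) (by linarith)

lemma summable_pow_div_Gamma {a b : ℝ} (ha : 1 ≤ a) (hb : 0 < b) (x : ℝ) :
    Summable fun n : ℕ => x ^ n / Gamma (a * n + b) := by
  refine summable_of_ratio_norm_eventually_le (r := 1 / 2) (by norm_num) ?_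
  filter_upwards [eventually_ge_atTop ⌈2 * |x| + 1⌉₊] with n hn
  set y := a * n + b
  have hy : 2 * |x| + 1 ≤ y := by
    have : (⌈2 * |x| + 1⌉₊ : ℝ) ≤ n := by exact_mod_cast hn
    have : (n : ℝ) ≤ a * n := le_mul_of_one_le_left n.cast_nonneg ha
    linarith [Nat.le_ceil (2 * |x| + 1)]
  have hy1 : 1 ≤ y := by linarith [abs_nonneg x]
  have hΓy : 0 < Gamma y := Gamma_mul_natCast_add_pos (by linarith) hb n
  have hΓya : y * Gamma y ≤ Gamma (y + a) :=
    Gamma_add_one (by linarith : y ≠ 0) ▸ Gamma_add_one_le_Gamma_add (by linarith) ha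
  have hsucc : a * ((n + 1 : ℕ) : ℝ) + b = y + a := by push_cast; ring
  have hΓya_pos : 0 < Gamma (y + a) := Gamma_pos_of_pos (by linarith)
  rw [hsucc, norm_div, norm_div, norm_pow, norm_pow, norm_of_nonneg hΓy.le,
    norm_of_nonneg hΓya_pos.le]
  calc ‖x‖ ^ (n + 1) / Gamma (y + a) ≤ ‖x‖ ^ n * (y / 2) / (y * Gamma y) := by
        rw [pow_succ]
        gcongr
        linarith [Real.norm_eq_abs x]
    _ = 1 / 2 * (‖x‖ ^ n / Gamma y) := by
        field_simp

lemma continuous_ML {a b : ℝ} (ha : 1 ≤ a) (hb : 0 < b) : Continuous (ML a b) := by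
  refine continuous_iff_continuousAt.mpr fun x => ?_
  have hball : ContinuousOn (ML a b) (Metric.ball 0 (|x| + 1)) := by
    refine continuousOn_tsum (fun n => (continuous_pow n).div_const _ |>.continuousOn)
      (summable_pow_div_Gamma ha hb (|x| + 1)) fun n y hy => ?_
    rw [norm_div, norm_pow, norm_of_nonneg (Gamma_mul_natCast_add_pos (by linarith) hb n).le]
    gcongr
    simpa using (Metric.mem_ball.mp hy).le
  exact hball.continuousAt (Metric.isOpen_ball.mem_nhds (by simp))

lemma pow_mul_rpow_mul_add {y : ℝ} (hy : 0 < y) (x a c : ℝ) (n : ℕ) :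
    x ^ n * y ^ (a * n + c) = y ^ c * (x * y ^ a) ^ n := by
  rw [rpow_add hy, mul_pow, ← rpow_natCast (y ^ a), ← rpow_mul hy.le]
  ring

lemma rpow_le_rpow_add_rpow {p q y : ℝ} (hp : 0 < p) (hpy : p ≤ y) (hyq : y ≤ q) (c : ℝ) :
    y ^ c ≤ p ^ c + q ^ c := by
  have hy : 0 < y := hp.trans_le hpy
  rcases le_total 0 c with hc | hc
  · linarith [rpow_le_rpow hy.le hyq hc, rpow_pos_of_pos hp c]
  · linarith [rpow_le_rpow_of_nonpos hp hpy hc, rpow_pos_of_pos (hy.trans_le hyq) c]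

noncomputable def mlKernel (α lam x : ℝ) : ℝ := x ^ (α - 1) * ML α α (lam * x ^ α)

lemma continuous_mlKernel {α : ℝ} (hα : 1 < α) (lam : ℝ) : Continuous (mlKernel α lam) := by
  have hML := continuous_ML hα.le (by linarith : 0 < α)
  unfold mlKernel
  fun_prop (disch := linarith)

lemma mlKernel_zero {α : ℝ} (hα : 1 < α) (lam : ℝ) : mlKernel α lam 0 = 0 := by
  simp [mlKernel, zero_rpow (by linarith : α - 1 ≠ 0)]

lemma hasDerivAt_mlKernel {α : ℝ} (hα : 1 < α) (lam : ℝ) {t : ℝ} (ht : 0 < t) :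
    HasDerivAt (mlKernel α lam) (t ^ (α - 2) * ML α (α - 1) (lam * t ^ α)) t := by
  set f : ℕ → ℝ → ℝ := fun n y => lam ^ n * y ^ (α * n + (α - 1)) / Gamma (α * n + α)
  set f' : ℕ → ℝ → ℝ := fun n y => y ^ (α - 2) * ((lam * y ^ α) ^ n / Gamma (α * n + (α - 1)))
  set U := Ioo (t / 2) (2 * t)
  have htU : t ∈ U := ⟨by linarith, by linarith⟩
  have hexp : ∀ n : ℕ, 0 < α * n + (α - 1) := fun n => by positivity
  have hderiv : ∀ n, ∀ y ∈ U, HasDerivAt (f n) (f' n y) y := by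
    intro n y hy
    have hy0 : 0 < y := by linarith [hy.1]
    refine (((hasDerivAt_rpow_const (p := α * n + (α - 1)) (Or.inl hy0.ne')).const_mul
      (lam ^ n)).div_const (Gamma (α * n + α))).congr_deriv ?_
    rw [show α * n + α = α * n + (α - 1) + 1 by ring, Gamma_add_one (hexp n).ne',
      show α * n + (α - 1) - 1 = α * n + (α - 2) by ring, mul_left_comm,
      pow_mul_rpow_mul_add hy0, mul_div_mul_left _ _ (hexp n).ne', mul_div_assoc]
  set K := (t / 2) ^ (α - 2) + (2 * t) ^ (α - 2)
  have hbound : ∀ n, ∀ y ∈ U, ‖f' n y‖ ≤ K * ((|lam| * (2 * t) ^ α) ^ n /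
      Gamma (α * n + (α - 1))) := by
    intro n y hy
    have hy0 : 0 < y := by linarith [hy.1]
    have hΓ := Gamma_pos_of_pos (hexp n)
    rw [norm_mul, norm_div, norm_pow, norm_mul, norm_of_nonneg (rpow_nonneg hy0.le _),
      norm_of_nonneg (rpow_nonneg hy0.le _), norm_of_nonneg hΓ.le, Real.norm_eq_abs]
    gcongr
    · exact rpow_le_rpow_add_rpow (by linarith) hy.1.le hy.2.le _
    · exact hy.2.le
  have hsum : Summable fun n => f n t := by
    refine ((summable_pow_div_Gamma hα.le (by linarith : 0 < α) (lam * t ^ α)).mul_left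
      (t ^ (α - 1))).congr fun n => ?_
    rw [← mul_div_assoc, ← pow_mul_rpow_mul_add ht]
  have H := hasDerivAt_tsum_of_isPreconnected
    ((summable_pow_div_Gamma hα.le (by linarith) _).mul_left K) isOpen_Ioo
    isPreconnected_Ioo hderiv hbound htU hsum htU
  rw [tsum_mul_left] at H
  refine H.congr_of_eventuallyEq ?_
  filter_upwards [lt_mem_nhds ht] with y hy
  simp only [mlKernel, ML, f, ← tsum_mul_left, ← mul_div_assoc, pow_mul_rpow_mul_add hy]

lemma greenG_eq_mlKernel {α : ℝ} (hα : 1 < α) (lam t s : ℝ) :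
    greenG α lam t s = mlKernel α lam t * ML α (α - 1) (lam * (1 - s) ^ α) /
      ((1 - s) ^ (2 - α) * ML α (α - 1) lam) - mlKernel α lam (max (t - s) 0) := by
  unfold greenG
  split_ifs with hst
  · rw [max_eq_left (sub_nonneg.2 hst)]
    rfl
  · rw [max_eq_right (by linarith [not_le.1 hst]), mlKernel_zero hα, sub_zero]
    rfl

lemma continuousOn_greenG {α lam : ℝ} (hα : 1 < α) (hML : ML α (α - 1) lam ≠ 0) :
    ContinuousOn (fun p : ℝ × ℝ => greenG α lam p.1 p.2) {p | p.2 < 1} := by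
  have hK := continuous_mlKernel hα lam
  have hE := continuous_ML hα.le (by linarith : 0 < α - 1)
  simp only [greenG_eq_mlKernel hα]
  refine ContinuousOn.sub (ContinuousOn.div (by fun_prop (disch := linarith)) ?_ ?_)
    (by fun_prop)
  · exact ((continuousOn_const.sub continuous_snd.continuousOn).rpow_const
      fun p hp => Or.inl (sub_pos.2 hp).ne').mul continuousOn_const
  · exact fun p hp => mul_ne_zero (rpow_pos_of_pos (sub_pos.2 hp) _).ne' hML

lemma hasDerivAt_greenG_one {α lam s : ℝ} (hα : 1 < α) (hML : ML α (α - 1) lam ≠ 0)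
    (hs : s < 1) : HasDerivAt (fun t => greenG α lam t s) 0 1 := by
  set C := ML α (α - 1) (lam * (1 - s) ^ α) / ((1 - s) ^ (2 - α) * ML α (α - 1) lam)
  have hev : (fun t => greenG α lam t s) =ᶠ[𝓝 1]
      fun t => mlKernel α lam t * C - mlKernel α lam (t - s) := by
    filter_upwards [lt_mem_nhds hs] with t hst
    rw [greenG_eq_mlKernel hα, max_eq_left (by linarith), mul_div_assoc]
  have hD := ((hasDerivAt_mlKernel hα lam one_pos).mul_const C).sub
    ((hasDerivAt_mlKernel hα lam (sub_pos.2 hs)).comp_sub_const 1 s)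
  refine (hD.congr_deriv ?_).congr_of_eventuallyEq hev
  have h1s : 0 < 1 - s := sub_pos.2 hs
  rw [one_rpow, one_rpow, mul_one, one_mul, show α - 2 = -(2 - α) by ring, rpow_neg h1s.le]
  simp only [C]
  field_simp
  ring

theorem stmt4_general (α lam : ℝ) (hα1 : 1 < α) (hML : ML α (α - 1) lam ≠ 0) :
    ContinuousOn (fun p : ℝ × ℝ => greenG α lam p.1 p.2) (Set.Icc 0 1 ×ˢ Set.Ico 0 1) ∧
    (∀ s ∈ Set.Ico (0:ℝ) 1, greenG α lam 0 s = 0) ∧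
    (∀ t ∈ Set.Icc (0:ℝ) 1, greenG α lam t 0 = 0) ∧
    (∀ s ∈ Set.Ico (0:ℝ) 1, deriv (fun t => greenG α lam t s) 1 = 0) := by
  refine ⟨(continuousOn_greenG hα1 hML).mono fun p hp => hp.2.2, fun s hs => ?_,
    fun t ht => ?_, fun s hs => (hasDerivAt_greenG_one hα1 hML hs.2).deriv⟩
  · rw [greenG_eq_mlKernel hα1, max_eq_right (by linarith [hs.1]), mlKernel_zero hα1,
      zero_mul, zero_div, sub_zero]
  · simp [greenG_eq_mlKernel hα1, max_eq_left ht.1, hML]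

/-- Continuity of the Green's function on `[0,1] × [0,1)` and the boundary identities
`G(0,s) = 0`, `G(t,0) = 0` and `(∂G/∂t)(1,s) = 0`. -/
theorem stmt4 (α lam : ℝ) (hα1 : 1 < α) (hα2 : α ≤ 2) (hML : ML α (α - 1) lam ≠ 0) :
    ContinuousOn (fun p : ℝ × ℝ => greenG α lam p.1 p.2) (Set.Icc 0 1 ×ˢ Set.Ico 0 1) ∧
    (∀ s ∈ Set.Ico (0:ℝ) 1, greenG α lam 0 s = 0) ∧
    (∀ t ∈ Set.Icc (0:ℝ) 1, greenG α lam t 0 = 0) ∧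
    (∀ s ∈ Set.Ico (0:ℝ) 1, deriv (fun t => greenG α lam t s) 1 = 0) :=
  stmt4_general α lam hα1 hML
end

section
/- Let 1<α≤2, λ₁* the largest real zero of E_{α,α−1}(λ)=0, λ>λ₁*, and let f:I×[0,∞)→[0,∞) be continuous. Let m, M be as in Lemma 3 and set u₀(t)=t^{α−2} m(t)/M. Then the operator T defined by Tu(t)=∫₀¹ G(t,s) f(s, s^{2−α}u(s)) ds maps the cone P_{u₀} into itself and is completely continuous on P_{u₀}; that is, T is continuous and maps bounded subsets of P_{u₀} into relatively compact subsets of C_{2−α}(I). -/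
/-- Membership in `C_{2-α}(I)`: `t ↦ t^{2-α}u(t)` extends to a continuous function on
`I = [0,1]`. -/
def InC2ma (α : ℝ) (u : ℝ → ℝ) : Prop :=
  ∃ v : ℝ → ℝ, ContinuousOn v (Set.Icc 0 1) ∧
    ∀ t ∈ Set.Ioc (0:ℝ) 1, v t = t ^ (2 - α) * u t

/-- The norm of `C_{2-α}(I)`: `‖u‖_{2-α} = max_{t ∈ [0,1]} t^{2-α}|u(t)|`. -/
noncomputable def norm2ma (α : ℝ) (u : ℝ → ℝ) : ℝ :=
  sSup ((fun t : ℝ => t ^ (2 - α) * |u t|) '' Set.Icc (0:ℝ) 1)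

/-- The cone `P_{u₀} = {u ∈ C_{2-α}(I) : u(t) ≥ u₀(t)‖u‖_{2-α} for all t ∈ (0,1]}`. -/
def coneP (α : ℝ) (u₀ : ℝ → ℝ) : Set (ℝ → ℝ) :=
  {u | InC2ma α u ∧ ∀ t ∈ Set.Ioc (0:ℝ) 1, u₀ t * norm2ma α u ≤ u t}

/-- The integral operator `Tu(t) = ∫₀¹ G(t,s) f(s, s^{2-α}u(s)) ds`. -/
noncomputable def Tint (α lam : ℝ) (f : ℝ → ℝ → ℝ) (u : ℝ → ℝ) : ℝ → ℝ :=
  fun t => ∫ s in (0:ℝ)..1, greenG α lam t s * f s (s ^ (2 - α) * u s)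

open MeasureTheory Set Filter Topology

noncomputable def phiw (α s : ℝ) : ℝ := s * (1 - s) ^ (α - 2)
noncomputable def Hker (α lam t s : ℝ) : ℝ := t ^ (2 - α) * greenG α lam t s

lemma mlSummable {α β : ℝ} (hα : 1 ≤ α) (hβ : 0 < β) {R : ℝ} (hR : 0 < R) :
    Summable (fun k : ℕ => R ^ k / Real.Gamma (α * k + β)) := by
  apply summable_of_ratio_norm_eventually_le (r := 1/2) (by norm_num)
  filter_upwards [Filter.eventually_ge_atTop ⌈max (2*R) 1⌉₊] with k hk
  have hkR : max (2*R) 1 ≤ (k:ℝ) := le_trans (Nat.le_ceil _) (by exact_mod_cast hk)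
  have hx : (0:ℝ) < α * k + β := by
    have : (0:ℝ) ≤ α * k := mul_nonneg (by linarith) (Nat.cast_nonneg k)
    linarith
  have hx1 : (1:ℝ) ≤ α * k + β := by
    have : (1:ℝ) ≤ (k:ℝ) := le_trans (le_max_right _ _) hkR
    nlinarith [(Nat.cast_nonneg k : (0:ℝ) ≤ k)]
  have hx2R : 2*R ≤ α * k + β := by
    have : 2*R ≤ (k:ℝ) := le_trans (le_max_left _ _) hkR
    nlinarith [(Nat.cast_nonneg k : (0:ℝ) ≤ k)]
  have hΓx : 0 < Real.Gamma (α * k + β) := Real.Gamma_pos_of_pos hx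
  have hstep : α * (k:ℝ) + β ≤ α * (k+1:ℕ) + β - 1 + 1 := by push_cast; ring_nf; nlinarith
  have hmono : (α * k + β) * Real.Gamma (α * k + β) ≤ Real.Gamma (α * (k+1:ℕ) + β) := by
    have h1 : Real.Gamma (α * k + β + 1) = (α * k + β) * Real.Gamma (α * k + β) :=
      Real.Gamma_add_one (ne_of_gt hx)
    rw [← h1]
    have hle : α * k + β + 1 ≤ α * (k+1:ℕ) + β := by push_cast; nlinarith
    rcases eq_or_lt_of_le hle with h | h
    · rw [h]
    · exact le_of_lt (Real.Gamma_strictMonoOn_Ici (by simp; linarith) (by simp; linarith) h)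
  have hΓ2 : 0 < Real.Gamma (α * (k+1:ℕ) + β) := Real.Gamma_pos_of_pos (by positivity)
  rw [Real.norm_eq_abs, Real.norm_eq_abs, abs_div, abs_div, abs_of_pos hΓx, abs_of_pos hΓ2,
    abs_pow, abs_pow, abs_of_pos hR]
  have h2RΓ : 2*R*Real.Gamma (α * k + β) ≤ Real.Gamma (α * (k+1:ℕ) + β) := by nlinarith
  rw [div_le_iff₀ hΓ2]
  have : R ^ (k+1) = R^k * R := by ring
  rw [this]
  calc R^k * R = (1/2 * (R^k / Real.Gamma (α*k+β))) * (2*R*Real.Gamma (α*k+β)) := by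
        field_simp
    _ ≤ (1/2 * (R^k / Real.Gamma (α*k+β))) * Real.Gamma (α * (k+1:ℕ) + β) := by
        apply mul_le_mul_of_nonneg_left h2RΓ; positivity

lemma mlContinuous {α β : ℝ} (hα : 1 ≤ α) (hβ : 0 < β) : Continuous (ML α β) := by
  rw [continuous_iff_continuousAt]
  intro x
  have hR : (0:ℝ) < |x| + 1 := by positivity
  have hcont := continuousOn_tsum (f := fun (k:ℕ) (y:ℝ) => y ^ k / Real.Gamma (α*k+β))
    (s := Metric.closedBall 0 (|x|+1)) (fun i => Continuous.continuousOn (by continuity))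
    (mlSummable hα hβ hR) ?_
  · exact hcont.continuousAt (Metric.closedBall_mem_nhds_of_mem
      (by rw [Metric.mem_ball, Real.dist_eq, sub_zero]; linarith))
  · intro n y hy
    have hΓ : 0 < Real.Gamma (α*n+β) := Real.Gamma_pos_of_pos (by
      have : (0:ℝ) ≤ α * n := mul_nonneg (by linarith) (Nat.cast_nonneg n)
      linarith)
    have hyx : |y| ≤ |x| + 1 := by
      have := Metric.mem_closedBall.1 hy
      rwa [Real.dist_eq, sub_zero] at this
    rw [Real.norm_eq_abs, abs_div, abs_of_pos hΓ, abs_pow]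
    exact (div_le_div_iff_of_pos_right hΓ).mpr <| pow_le_pow_left₀ (abs_nonneg y) hyx n

lemma rpow_cont {p : ℝ} (hp : 0 ≤ p) : Continuous fun x : ℝ => x ^ p := by
  rw [continuous_iff_continuousAt]; intro x
  exact Real.continuousAt_rpow_const x p (Or.inr hp)


lemma greenG_eq {α lam : ℝ} (hα1 : 1 < α) (s t : ℝ) :
    greenG α lam t s =
      (ML α (α-1) (lam * (1-s)^α) / ((1-s)^(2-α) * ML α (α-1) lam)) *
        (t ^ (α-1) * ML α α (lam * t ^ α)) -
      (max t s - s) ^ (α-1) * ML α α (lam * (max t s - s) ^ α) := by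
  unfold greenG
  rcases le_or_gt s t with h | h
  · rw [if_pos h, max_eq_left h]; ring
  · rw [if_neg (not_le.2 h), max_eq_right h.le, sub_self,
      Real.zero_rpow (show α - 1 ≠ 0 by intro hc; exact absurd hc (by intro hc'; linarith [sub_eq_zero.1 hc']))]
    ring

lemma hker_cont_t {α lam : ℝ} (hα1 : 1 < α) (hα2 : α ≤ 2) (s : ℝ) :
    Continuous fun t => Hker α lam t s := by
  have hMLc : Continuous (ML α α) := mlContinuous (by linarith) (by linarith)
  have heq : (fun t => Hker α lam t s) = fun t =>
      t ^ (2-α) * ((ML α (α-1) (lam * (1-s)^α) / ((1-s)^(2-α) * ML α (α-1) lam)) *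
        (t ^ (α-1) * ML α α (lam * t ^ α)) -
      (max t s - s) ^ (α-1) * ML α α (lam * (max t s - s) ^ α)) := by
    funext t; rw [Hker, greenG_eq hα1]
  rw [heq]
  have hbase : Continuous fun t : ℝ => max t s - s := (continuous_id.max continuous_const).sub continuous_const
  refine (rpow_cont (by linarith)).mul (Continuous.sub ?_ ?_)
  · exact continuous_const.mul ((rpow_cont (by linarith)).mul
      (hMLc.comp (continuous_const.mul (rpow_cont (by linarith)))))
  · exact ((rpow_cont (by linarith)).comp hbase).mul
      (hMLc.comp (continuous_const.mul ((rpow_cont (by linarith)).comp hbase)))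

lemma greenG_meas_s {α lam : ℝ} (hα1 : 1 < α) (hα2 : α ≤ 2) (t : ℝ) :
    Measurable fun s => greenG α lam t s := by
  have hMLa : Continuous (ML α α) := mlContinuous (by linarith) (by linarith)
  have hMLb : Continuous (ML α (α-1)) := mlContinuous (by linarith) (by linarith)
  have h1s : Continuous fun s : ℝ => (1 - s : ℝ) := continuous_const.sub continuous_id
  have hts : Continuous fun s : ℝ => (t - s : ℝ) := continuous_const.sub continuous_id
  have hQ : Measurable fun s : ℝ =>
      t ^ (α - 1) * ML α α (lam * t ^ α) * ML α (α - 1) (lam * (1 - s) ^ α) /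
        ((1 - s) ^ (2 - α) * ML α (α - 1) lam) := by
    apply Measurable.div
    · exact (measurable_const.mul ((hMLb.comp (continuous_const.mul
        ((rpow_cont (by linarith)).comp h1s))).measurable))
    · exact (((rpow_cont (by linarith)).comp h1s).measurable).mul measurable_const
  unfold greenG
  apply Measurable.ite (measurableSet_le measurable_id measurable_const)
  · exact hQ.sub ((((rpow_cont (by linarith)).comp hts).mul
      (hMLa.comp (continuous_const.mul ((rpow_cont (by linarith)).comp hts)))).measurable)
  · exact hQ

lemma greenG_zero {α lam : ℝ} (hα1 : 1 < α) {s : ℝ} (hs : 0 < s) : greenG α lam 0 s = 0 := by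
  unfold greenG
  rw [if_neg (not_le.2 hs), Real.zero_rpow (ne_of_gt (by linarith : (0:ℝ) < α - 1))]
  ring

lemma hker_zero {α lam : ℝ} (hα1 : 1 < α) {s : ℝ} (hs : 0 < s) : Hker α lam 0 s = 0 := by
  rw [Hker, greenG_zero hα1 hs, mul_zero]

lemma phiw_pos {α : ℝ} {s : ℝ} (hs : s ∈ Ioo (0:ℝ) 1) : 0 < phiw α s :=
  mul_pos hs.1 (Real.rpow_pos_of_pos (by linarith [hs.2]) _)

lemma phiw_nonneg {α : ℝ} {s : ℝ} (hs : s ∈ Ioc (0:ℝ) 1) : 0 ≤ phiw α s :=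
  mul_nonneg hs.1.le (Real.rpow_nonneg (by linarith [hs.2]) _)

section Bounds
variable {α lam M : ℝ} {m : ℝ → ℝ}

lemma hker_bounds (hα1 : 1 < α) (hα2 : α ≤ 2) (hM : 0 < M)
    (hm : ContinuousOn m (Icc 0 1)) (hmpos : ∀ t ∈ Set.Ioc (0:ℝ) 1, 0 < m t)
    (hmM : ∀ t ∈ Set.Ioo (0:ℝ) 1, ∀ s ∈ Set.Ioo (0:ℝ) 1,
      m t ≤ t ^ (2 - α) * greenG α lam t s / (s * (1 - s) ^ (α - 2)) ∧
      t ^ (2 - α) * greenG α lam t s / (s * (1 - s) ^ (α - 2)) ≤ M) :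
    ∀ s ∈ Ioo (0:ℝ) 1, (∀ t ∈ Icc (0:ℝ) 1, 0 ≤ Hker α lam t s ∧ Hker α lam t s ≤ M * phiw α s)
      ∧ (∀ t ∈ Ioc (0:ℝ) 1, m t * phiw α s ≤ Hker α lam t s) := by
  intro s hs
  have hd : 0 < phiw α s := phiw_pos hs
  -- bounds on the open interval
  have hOo : ∀ t ∈ Ioo (0:ℝ) 1, m t * phiw α s ≤ Hker α lam t s ∧ Hker α lam t s ≤ M * phiw α s := by
    intro t ht
    obtain ⟨h1, h2⟩ := hmM t ht s hs
    have e : t ^ (2 - α) * greenG α lam t s = Hker α lam t s := rfl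
    rw [e] at h1 h2
    constructor
    · exact (le_div_iff₀ hd).1 h1
    · exact (div_le_iff₀ hd).1 h2
  -- limit facts at t = 1
  have hne : (𝓝[Ioo (0:ℝ) 1] (1:ℝ)).NeBot := by
    apply mem_closure_iff_nhdsWithin_neBot.1
    rw [closure_Ioo (by norm_num : (0:ℝ) ≠ 1)]
    exact ⟨zero_le_one, le_refl 1⟩
  have htend : Tendsto (fun t => Hker α lam t s) (𝓝[Ioo (0:ℝ) 1] 1) (𝓝 (Hker α lam 1 s)) :=
    ((hker_cont_t hα1 hα2 s).continuousAt).continuousWithinAt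
  have h1upper : Hker α lam 1 s ≤ M * phiw α s := by
    apply le_of_tendsto htend
    filter_upwards [eventually_mem_nhdsWithin] with t ht using (hOo t ht).2
  have hmtend : Tendsto (fun t => m t * phiw α s) (𝓝[Ioo (0:ℝ) 1] 1) (𝓝 (m 1 * phiw α s)) := by
    apply Tendsto.mul_const
    exact ((hm 1 ⟨zero_le_one, le_refl 1⟩).mono Ioo_subset_Icc_self : ContinuousWithinAt m (Ioo 0 1) 1)
  have h1lower : m 1 * phiw α s ≤ Hker α lam 1 s := by
    apply le_of_tendsto_of_tendsto hmtend htend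
    filter_upwards [eventually_mem_nhdsWithin] with t ht using (hOo t ht).1
  constructor
  · intro t ht
    rcases eq_or_lt_of_le ht.1 with h0 | h0
    · rw [← h0, hker_zero hα1 hs.1]
      exact ⟨le_refl 0, by positivity⟩
    · rcases eq_or_lt_of_le ht.2 with h1 | h1
      · rw [h1]
        refine ⟨le_trans ?_ h1lower, h1upper⟩
        have := hmpos 1 ⟨zero_lt_one, le_refl 1⟩
        positivity
      · refine ⟨le_trans ?_ (hOo t ⟨h0, h1⟩).1, (hOo t ⟨h0, h1⟩).2⟩
        have := hmpos t ⟨h0, h1.le⟩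
        positivity
  · intro t ht
    rcases eq_or_lt_of_le ht.2 with h1 | h1
    · rw [h1]; exact h1lower
    · exact (hOo t ⟨ht.1, h1⟩).1

end Bounds

lemma phiw_integrable {α : ℝ} (hα1 : 1 < α) : IntegrableOn (phiw α) (Ioc (0:ℝ) 1) := by
  have h1 : IntervalIntegrable (fun x : ℝ => x ^ (α-2)) volume 0 1 :=
    intervalIntegral.intervalIntegrable_rpow' (by linarith)
  have h2 : IntervalIntegrable (fun s : ℝ => (1-s) ^ (α-2)) volume 0 1 := by
    have := h1.comp_sub_left 1
    exact (by simpa using this : IntervalIntegrable (fun s : ℝ => (1-s)^(α-2)) volume 1 0).symm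
  have h3 : IntegrableOn (fun s : ℝ => (1-s)^(α-2)) (Ioc (0:ℝ) 1) :=
    (intervalIntegrable_iff_integrableOn_Ioc_of_le zero_le_one).1 h2
  apply h3.mono'
  · apply Measurable.aestronglyMeasurable
    unfold phiw
    fun_prop
  · filter_upwards [ae_restrict_mem measurableSet_Ioc] with s hsm
    rw [Real.norm_eq_abs, abs_of_nonneg (phiw_nonneg hsm), phiw]
    have h4 : (0:ℝ) ≤ (1-s) ^ (α-2) := Real.rpow_nonneg (by linarith [hsm.2]) _
    nlinarith [hsm.1.le, hsm.2]

lemma norm2ma_le {α C : ℝ} {u : ℝ → ℝ} (hC : 0 ≤ C)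
    (h : ∀ t ∈ Icc (0:ℝ) 1, t ^ (2-α) * |u t| ≤ C) : norm2ma α u ≤ C := by
  apply Real.sSup_le _ hC
  rintro x ⟨t, ht, rfl⟩; exact h t ht

lemma inc2ma_bdd {α : ℝ} {u : ℝ → ℝ} (h : InC2ma α u) :
    BddAbove ((fun t : ℝ => t ^ (2 - α) * |u t|) '' Icc (0:ℝ) 1) := by
  obtain ⟨v, hv, heq⟩ := h
  obtain ⟨C, hC⟩ := (isCompact_Icc).exists_bound_of_continuousOn hv
  refine ⟨max C ((0:ℝ) ^ (2-α) * |u 0|), ?_⟩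
  rintro x ⟨t, ht, rfl⟩
  rcases eq_or_lt_of_le ht.1 with h0 | h0
  · rw [← h0]; exact le_max_right _ _
  · apply le_trans _ (le_max_left _ _)
    have he : t ^ (2-α) * |u t| = |v t| := by
      rw [heq t ⟨h0, ht.2⟩, abs_mul, abs_of_nonneg (Real.rpow_nonneg ht.1 _)]
    simp only []
    rw [he]
    simpa [Real.norm_eq_abs] using hC t ht

lemma norm2ma_ge {α : ℝ} {u : ℝ → ℝ} (h : InC2ma α u) :
    ∀ t ∈ Icc (0:ℝ) 1, t ^ (2-α) * |u t| ≤ norm2ma α u :=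
  fun t ht => le_csSup (inc2ma_bdd h) ⟨t, ht, rfl⟩

lemma norm2ma_nonneg {α : ℝ} {u : ℝ → ℝ} (h : InC2ma α u) : 0 ≤ norm2ma α u :=
  le_trans (by positivity) (norm2ma_ge h 1 ⟨zero_le_one, le_refl 1⟩)

lemma inc2ma_sub {α : ℝ} {u v : ℝ → ℝ} (hu : InC2ma α u) (hv : InC2ma α v) :
    InC2ma α (u - v) := by
  obtain ⟨vu, hvu, hequ⟩ := hu
  obtain ⟨vv, hvv, heqv⟩ := hv
  refine ⟨vu - vv, hvu.sub hvv, fun t ht => ?_⟩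
  rw [Pi.sub_apply, Pi.sub_apply, hequ t ht, heqv t ht]; ring

lemma norm2ma_triangle {α : ℝ} {u v : ℝ → ℝ} (hu : InC2ma α u) (hv : InC2ma α v) :
    norm2ma α v ≤ norm2ma α u + norm2ma α (u - v) := by
  apply norm2ma_le (by
    have := norm2ma_nonneg hu; have := norm2ma_nonneg (inc2ma_sub hu hv); linarith)
  intro t ht
  have h1 := norm2ma_ge hu t ht
  have h2 := norm2ma_ge (inc2ma_sub hu hv) t ht
  have h3 : t ^ (2-α) * |v t| ≤ t ^ (2-α) * |u t| + t ^ (2-α) * |(u - v) t| := by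
    rw [← mul_add]
    apply mul_le_mul_of_nonneg_left _ (Real.rpow_nonneg ht.1 _)
    rw [Pi.sub_apply]
    calc |v t| = |u t - (u t - v t)| := by ring_nf
      _ ≤ |u t| + |u t - v t| := abs_sub _ _
  linarith

lemma cone_ext {α M : ℝ} {m u : ℝ → ℝ} (hα1 : 1 < α) (hM : 0 < M)
    (hmpos : ∀ t ∈ Set.Ioc (0:ℝ) 1, 0 < m t)
    (hu : u ∈ coneP α (fun t => t ^ (α - 2) * m t / M)) :
    ∃ v : ℝ → ℝ, ContinuousOn v (Icc 0 1) ∧ (∀ s ∈ Ioc (0:ℝ) 1, v s = s ^ (2-α) * u s) ∧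
      (∀ s ∈ Icc (0:ℝ) 1, 0 ≤ v s ∧ v s ≤ norm2ma α u) := by
  obtain ⟨⟨v, hv, heq⟩, hcone⟩ := hu
  have hIn : InC2ma α u := ⟨v, hv, heq⟩
  refine ⟨v, hv, heq, ?_⟩
  have hIoc : ∀ s ∈ Ioc (0:ℝ) 1, 0 ≤ v s ∧ v s ≤ norm2ma α u := by
    intro s hs
    have hupos : 0 ≤ u s := by
      refine le_trans ?_ (hcone s hs)
      have h1 : 0 ≤ s ^ (α-2) := Real.rpow_nonneg hs.1.le _
      have h2 : 0 ≤ m s := (hmpos s hs).le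
      have h3 : 0 ≤ norm2ma α u := norm2ma_nonneg hIn
      positivity
    constructor
    · rw [heq s hs]
      have := Real.rpow_nonneg hs.1.le (2-α)
      positivity
    · rw [heq s hs]
      calc s^(2-α) * u s ≤ s^(2-α) * |u s| :=
            mul_le_mul_of_nonneg_left (le_abs_self _) (Real.rpow_nonneg hs.1.le _)
        _ ≤ norm2ma α u := norm2ma_ge hIn s ⟨hs.1.le, hs.2⟩
  intro s hs
  rcases eq_or_lt_of_le hs.1 with h0 | h0
  · rw [← h0]
    have hne : (𝓝[Ioc (0:ℝ) 1] (0:ℝ)).NeBot := by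
      apply mem_closure_iff_nhdsWithin_neBot.1
      rw [closure_Ioc (by norm_num : (0:ℝ) ≠ 1)]
      exact ⟨le_refl 0, zero_le_one⟩
    have htend : Tendsto v (𝓝[Ioc (0:ℝ) 1] 0) (𝓝 (v 0)) :=
      (hv 0 ⟨le_refl 0, zero_le_one⟩).mono Ioc_subset_Icc_self
    constructor
    · exact ge_of_tendsto htend (by
        filter_upwards [eventually_mem_nhdsWithin] with t ht using (hIoc t ht).1)
    · exact le_of_tendsto htend (by
        filter_upwards [eventually_mem_nhdsWithin] with t ht using (hIoc t ht).2)
  · exact hIoc s ⟨h0, hs.2⟩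

lemma ae_Ioo01 : ∀ᵐ s ∂(volume.restrict (Ioc (0:ℝ) 1)), s ∈ Ioo (0:ℝ) 1 := by
  have h1 := ae_restrict_mem (μ := volume) (measurableSet_Ioc (a := (0:ℝ)) (b := 1))
  have h2 : ∀ᵐ s ∂(volume.restrict (Ioc (0:ℝ) 1)), s ≠ 1 := by
    apply ae_restrict_of_ae
    rw [ae_iff]
    have he : {s : ℝ | ¬ s ≠ 1} = {1} := by ext x; simp
    rw [he]
    exact Real.volume_singleton
  filter_upwards [h1, h2] with s hs hne
  exact ⟨hs.1, lt_of_le_of_ne hs.2 hne⟩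

section Core
variable {α lam M : ℝ} {m : ℝ → ℝ}

-- hypotheses bundle via a single bound hypothesis
variable (hbnd : ∀ s ∈ Ioo (0:ℝ) 1,
    (∀ t ∈ Icc (0:ℝ) 1, 0 ≤ Hker α lam t s ∧ Hker α lam t s ≤ M * phiw α s)
    ∧ (∀ t ∈ Ioc (0:ℝ) 1, m t * phiw α s ≤ Hker α lam t s))

include hbnd

omit hbnd in
lemma hker_meas_s (hα1 : 1 < α) (hα2 : α ≤ 2) (t : ℝ) :
    Measurable fun s => Hker α lam t s :=
  measurable_const.mul (greenG_meas_s hα1 hα2 t)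

lemma integrable_HW (hα1 : 1 < α) (hα2 : α ≤ 2) (hM : 0 < M)
    {t : ℝ} (ht : t ∈ Icc (0:ℝ) 1)
    {w : ℝ → ℝ} (hw : ContinuousOn w (Icc 0 1)) {B : ℝ} (hB : ∀ s ∈ Icc (0:ℝ) 1, |w s| ≤ B) :
    IntegrableOn (fun s => Hker α lam t s * w s) (Ioc (0:ℝ) 1) := by
  apply Integrable.mono' (((phiw_integrable hα1).const_mul (M * B)) :
    Integrable (fun s => (M*B) * phiw α s) _)
  · exact ((hker_meas_s hα1 hα2 t).aestronglyMeasurable).mul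
      ((hw.mono Ioc_subset_Icc_self).aestronglyMeasurable measurableSet_Ioc)
  · filter_upwards [ae_Ioo01] with s hs
    have h1 := (hbnd s hs).1 t ht
    have h2 : |w s| ≤ B := hB s ⟨hs.1.le, hs.2.le⟩
    rw [Real.norm_eq_abs, abs_mul, abs_of_nonneg h1.1]
    calc Hker α lam t s * |w s| ≤ (M * phiw α s) * B := by
          apply mul_le_mul h1.2 h2 (abs_nonneg _)
          have := phiw_nonneg (α := α) (Ioo_subset_Ioc_self hs)
          positivity
      _ = M * B * phiw α s := by ring

omit hbnd in
lemma integrable_phiW (hα1 : 1 < α)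
    {w : ℝ → ℝ} (hw : ContinuousOn w (Icc 0 1)) {B : ℝ} (hB : ∀ s ∈ Icc (0:ℝ) 1, |w s| ≤ B) :
    IntegrableOn (fun s => phiw α s * w s) (Ioc (0:ℝ) 1) := by
  apply Integrable.mono' (((phiw_integrable hα1).const_mul B) :
    Integrable (fun s => B * phiw α s) _)
  · refine AEStronglyMeasurable.mul ?_
      ((hw.mono Ioc_subset_Icc_self).aestronglyMeasurable measurableSet_Ioc)
    apply Measurable.aestronglyMeasurable
    unfold phiw; fun_prop
  · filter_upwards [ae_restrict_mem measurableSet_Ioc] with s hs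
    rw [Real.norm_eq_abs, abs_mul, abs_of_nonneg (phiw_nonneg (α := α) hs)]
    have h2 : |w s| ≤ B := hB s ⟨hs.1.le, hs.2⟩
    have h3 := phiw_nonneg (α := α) hs
    calc phiw α s * |w s| ≤ phiw α s * B := mul_le_mul_of_nonneg_left h2 h3
      _ = B * phiw α s := by ring

omit hbnd in
lemma integral_phiW_nonneg {w : ℝ → ℝ} (hw0 : ∀ s ∈ Icc (0:ℝ) 1, 0 ≤ w s) :
    0 ≤ ∫ s in Ioc (0:ℝ) 1, phiw α s * w s :=
  setIntegral_nonneg measurableSet_Ioc fun s hs =>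
    mul_nonneg (phiw_nonneg hs) (hw0 s ⟨hs.1.le, hs.2⟩)

lemma integral_HW_upper (hα1 : 1 < α) (hα2 : α ≤ 2) (hM : 0 < M)
    {t : ℝ} (ht : t ∈ Icc (0:ℝ) 1)
    {w : ℝ → ℝ} (hw : ContinuousOn w (Icc 0 1)) {B : ℝ} (hB : ∀ s ∈ Icc (0:ℝ) 1, |w s| ≤ B)
    (hw0 : ∀ s ∈ Icc (0:ℝ) 1, 0 ≤ w s) :
    ∫ s in Ioc (0:ℝ) 1, Hker α lam t s * w s ≤ M * ∫ s in Ioc (0:ℝ) 1, phiw α s * w s := by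
  rw [← integral_const_mul]
  apply integral_mono_ae (integrable_HW hbnd hα1 hα2 hM ht hw hB)
    (((integrable_phiW hα1 hw hB)).const_mul M)
  filter_upwards [ae_Ioo01] with s hs
  have h1 := (hbnd s hs).1 t ht
  have h2 := hw0 s ⟨hs.1.le, hs.2.le⟩
  calc Hker α lam t s * w s ≤ (M * phiw α s) * w s := mul_le_mul_of_nonneg_right h1.2 h2
    _ = M * (phiw α s * w s) := by ring

lemma integral_HW_nonneg (hα1 : 1 < α) (hα2 : α ≤ 2) (hM : 0 < M)
    {t : ℝ} (ht : t ∈ Icc (0:ℝ) 1)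
    {w : ℝ → ℝ} (hw0 : ∀ s ∈ Icc (0:ℝ) 1, 0 ≤ w s) :
    0 ≤ ∫ s in Ioc (0:ℝ) 1, Hker α lam t s * w s := by
  apply integral_nonneg_of_ae
  filter_upwards [ae_Ioo01] with s hs
  exact mul_nonneg ((hbnd s hs).1 t ht).1 (hw0 s ⟨hs.1.le, hs.2.le⟩)

lemma hfun_cont (hα1 : 1 < α) (hα2 : α ≤ 2) (hM : 0 < M)
    {w : ℝ → ℝ} (hw : ContinuousOn w (Icc 0 1)) {B : ℝ} (hB : ∀ s ∈ Icc (0:ℝ) 1, |w s| ≤ B) :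
    ContinuousOn (fun t => ∫ s in Ioc (0:ℝ) 1, Hker α lam t s * w s) (Icc 0 1) := by
  apply continuousOn_of_dominated (bound := fun s => M * B * phiw α s)
  · intro t ht
    exact ((hker_meas_s hα1 hα2 t).aestronglyMeasurable).mul
      ((hw.mono Ioc_subset_Icc_self).aestronglyMeasurable measurableSet_Ioc)
  · intro t ht
    filter_upwards [ae_Ioo01] with s hs
    have h1 := (hbnd s hs).1 t ht
    have h2 : |w s| ≤ B := hB s ⟨hs.1.le, hs.2.le⟩
    rw [Real.norm_eq_abs, abs_mul, abs_of_nonneg h1.1]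
    calc Hker α lam t s * |w s| ≤ (M * phiw α s) * B := by
          apply mul_le_mul h1.2 h2 (abs_nonneg _)
          have := phiw_nonneg (α := α) (Ioo_subset_Ioc_self hs)
          positivity
      _ = M * B * phiw α s := by ring
  · exact (phiw_integrable hα1).const_mul (M*B)
  · filter_upwards [ae_Ioo01] with s hs
    exact ((hker_cont_t hα1 hα2 s).mul continuous_const).continuousOn

lemma phi_equicont (hα1 : 1 < α) (hα2 : α ≤ 2) (hM : 0 < M) :
    ∀ ε > 0, ∃ δ > 0, ∀ t ∈ Icc (0:ℝ) 1, ∀ t' ∈ Icc (0:ℝ) 1,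
      |t - t'| < δ → ∫ s in Ioc (0:ℝ) 1, |Hker α lam t s - Hker α lam t' s| < ε := by
  set Φ : ℝ × ℝ → ℝ := fun p => ∫ s in Ioc (0:ℝ) 1, |Hker α lam p.1 s - Hker α lam p.2 s|
    with hΦ
  have hcont : ContinuousOn Φ (Icc (0:ℝ) 1 ×ˢ Icc (0:ℝ) 1) := by
    apply continuousOn_of_dominated (bound := fun s => 2 * M * phiw α s)
    · intro p hp
      exact (((hker_meas_s hα1 hα2 p.1).sub (hker_meas_s hα1 hα2 p.2)).abs).aestronglyMeasurable
    · intro p hp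
      filter_upwards [ae_Ioo01] with s hs
      have h1 := (hbnd s hs).1 p.1 hp.1
      have h2 := (hbnd s hs).1 p.2 hp.2
      rw [Real.norm_eq_abs, abs_abs]
      calc |Hker α lam p.1 s - Hker α lam p.2 s| ≤ |Hker α lam p.1 s| + |Hker α lam p.2 s| :=
            abs_sub _ _
        _ = Hker α lam p.1 s + Hker α lam p.2 s := by
            rw [abs_of_nonneg h1.1, abs_of_nonneg h2.1]
        _ ≤ M * phiw α s + M * phiw α s := add_le_add h1.2 h2.2
        _ = 2 * M * phiw α s := by ring
    · exact (phiw_integrable hα1).const_mul (2*M)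
    · filter_upwards [ae_Ioo01] with s hs
      exact (((hker_cont_t hα1 hα2 s).comp continuous_fst).sub
        ((hker_cont_t hα1 hα2 s).comp continuous_snd)).abs.continuousOn
  have hK : IsCompact (Icc (0:ℝ) 1 ×ˢ Icc (0:ℝ) 1) := isCompact_Icc.prod isCompact_Icc
  have huc := hK.uniformContinuousOn_of_continuous hcont
  rw [Metric.uniformContinuousOn_iff] at huc
  intro ε hε
  obtain ⟨δ, hδ, h⟩ := huc ε hε
  refine ⟨δ, hδ, fun t ht t' ht' hd => ?_⟩
  have h0 : Φ (t', t') = 0 := by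
    rw [hΦ]
    simp
  have hmem1 : ((t, t') : ℝ × ℝ) ∈ Icc (0:ℝ) 1 ×ˢ Icc (0:ℝ) 1 := ⟨ht, ht'⟩
  have hmem2 : ((t', t') : ℝ × ℝ) ∈ Icc (0:ℝ) 1 ×ˢ Icc (0:ℝ) 1 := ⟨ht', ht'⟩
  have hdist : dist ((t, t') : ℝ × ℝ) ((t', t') : ℝ × ℝ) < δ := by
    rw [Prod.dist_eq]
    simp only [Real.dist_eq, sub_self, abs_zero]
    exact max_lt hd hδ
  have := h (t, t') hmem1 (t', t') hmem2 hdist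
  rw [Real.dist_eq, h0, sub_zero] at this
  calc Φ (t, t') ≤ |Φ (t, t')| := le_abs_self _
    _ < ε := this

omit hbnd in
lemma tint_eq_w (hα1 : 1 < α) {f : ℝ → ℝ → ℝ} {u v : ℝ → ℝ}
    (hv : ∀ s ∈ Ioc (0:ℝ) 1, v s = s ^ (2-α) * u s) (t : ℝ) :
    Tint α lam f u t = ∫ s in Ioc (0:ℝ) 1, greenG α lam t s * f s (v s) := by
  simp only [Tint]
  rw [intervalIntegral.integral_of_le zero_le_one]
  apply setIntegral_congr_fun measurableSet_Ioc
  intro s hs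
  simp only []
  rw [hv s hs]

omit hbnd in
lemma hw_scale (t : ℝ) (w : ℝ → ℝ) :
    ∫ s in Ioc (0:ℝ) 1, Hker α lam t s * w s
      = t ^ (2-α) * ∫ s in Ioc (0:ℝ) 1, greenG α lam t s * w s := by
  rw [← integral_const_mul]
  apply setIntegral_congr_fun measurableSet_Ioc
  intro s _
  simp only [Hker]; ring

omit hbnd in
lemma tint_zero (hα1 : 1 < α) (f : ℝ → ℝ → ℝ) (u : ℝ → ℝ) : Tint α lam f u 0 = 0 := by
  simp only [Tint]
  rw [intervalIntegral.integral_of_le zero_le_one]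
  rw [setIntegral_congr_fun (g := fun _ => (0:ℝ)) measurableSet_Ioc ?_, integral_zero]
  intro s hs
  simp only []
  rw [greenG_zero hα1 hs.1, zero_mul]


lemma integral_HW_lower (hα1 : 1 < α) (hα2 : α ≤ 2) (hM : 0 < M)
    {t : ℝ} (ht : t ∈ Ioc (0:ℝ) 1)
    {w : ℝ → ℝ} (hw : ContinuousOn w (Icc 0 1)) {B : ℝ} (hB : ∀ s ∈ Icc (0:ℝ) 1, |w s| ≤ B)
    (hw0 : ∀ s ∈ Icc (0:ℝ) 1, 0 ≤ w s) :
    m t * ∫ s in Ioc (0:ℝ) 1, phiw α s * w s ≤ ∫ s in Ioc (0:ℝ) 1, Hker α lam t s * w s := by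
  rw [← integral_const_mul]
  apply integral_mono_ae ((integrable_phiW hα1 hw hB).const_mul (m t))
    (integrable_HW hbnd hα1 hα2 hM ⟨ht.1.le, ht.2⟩ hw hB)
  filter_upwards [ae_Ioo01] with s hs
  have h2 := hw0 s ⟨hs.1.le, hs.2.le⟩
  calc m t * (phiw α s * w s) = (m t * phiw α s) * w s := by ring
    _ ≤ Hker α lam t s * w s := mul_le_mul_of_nonneg_right ((hbnd s hs).2 t ht) h2

lemma integrable_absHdiff (hα1 : 1 < α) (hα2 : α ≤ 2) (hM : 0 < M)
    {t t' : ℝ} (ht : t ∈ Icc (0:ℝ) 1) (ht' : t' ∈ Icc (0:ℝ) 1) :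
    IntegrableOn (fun s => |Hker α lam t s - Hker α lam t' s|) (Ioc (0:ℝ) 1) := by
  apply Integrable.mono' (((phiw_integrable hα1).const_mul (2*M)) :
    Integrable (fun s => (2*M) * phiw α s) _)
  · exact (((hker_meas_s hα1 hα2 t).sub (hker_meas_s hα1 hα2 t')).abs).aestronglyMeasurable
  · filter_upwards [ae_Ioo01] with s hs
    have h1 := (hbnd s hs).1 t ht
    have h2 := (hbnd s hs).1 t' ht'
    rw [Real.norm_eq_abs, abs_abs]
    calc |Hker α lam t s - Hker α lam t' s| ≤ |Hker α lam t s| + |Hker α lam t' s| := abs_sub _ _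
      _ = Hker α lam t s + Hker α lam t' s := by rw [abs_of_nonneg h1.1, abs_of_nonneg h2.1]
      _ ≤ M * phiw α s + M * phiw α s := add_le_add h1.2 h2.2
      _ = 2 * M * phiw α s := by ring

lemma integral_HW_tdiff (hα1 : 1 < α) (hα2 : α ≤ 2) (hM : 0 < M)
    {t t' : ℝ} (ht : t ∈ Icc (0:ℝ) 1) (ht' : t' ∈ Icc (0:ℝ) 1)
    {w : ℝ → ℝ} (hw : ContinuousOn w (Icc 0 1)) {B : ℝ} (hB : ∀ s ∈ Icc (0:ℝ) 1, |w s| ≤ B) :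
    |(∫ s in Ioc (0:ℝ) 1, Hker α lam t s * w s) - ∫ s in Ioc (0:ℝ) 1, Hker α lam t' s * w s|
      ≤ B * ∫ s in Ioc (0:ℝ) 1, |Hker α lam t s - Hker α lam t' s| := by
  have hi1 := integrable_HW hbnd hα1 hα2 hM ht hw hB
  have hi2 := integrable_HW hbnd hα1 hα2 hM ht' hw hB
  rw [← integral_sub hi1 hi2]
  calc |∫ s in Ioc (0:ℝ) 1, (Hker α lam t s * w s - Hker α lam t' s * w s)|
      ≤ ∫ s in Ioc (0:ℝ) 1, |Hker α lam t s * w s - Hker α lam t' s * w s| := by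
        simpa [Real.norm_eq_abs] using norm_integral_le_integral_norm
          (μ := volume.restrict (Ioc (0:ℝ) 1))
          (fun s => Hker α lam t s * w s - Hker α lam t' s * w s)
    _ ≤ ∫ s in Ioc (0:ℝ) 1, B * |Hker α lam t s - Hker α lam t' s| := by
        apply integral_mono_ae ((hi1.sub hi2).abs)
          ((integrable_absHdiff hbnd hα1 hα2 hM ht ht').const_mul B)
        filter_upwards [ae_Ioo01] with s hs
        have h2 : |w s| ≤ B := hB s ⟨hs.1.le, hs.2.le⟩
        calc |Hker α lam t s * w s - Hker α lam t' s * w s|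
            = |Hker α lam t s - Hker α lam t' s| * |w s| := by rw [← sub_mul, abs_mul]
          _ ≤ |Hker α lam t s - Hker α lam t' s| * B :=
              mul_le_mul_of_nonneg_left h2 (abs_nonneg _)
          _ = B * |Hker α lam t s - Hker α lam t' s| := mul_comm _ _
    _ = B * ∫ s in Ioc (0:ℝ) 1, |Hker α lam t s - Hker α lam t' s| := integral_const_mul B _

lemma integral_HW_diff (hα1 : 1 < α) (hα2 : α ≤ 2) (hM : 0 < M)
    {t : ℝ} (ht : t ∈ Icc (0:ℝ) 1)
    {w₁ w₂ : ℝ → ℝ} (hw₁ : ContinuousOn w₁ (Icc 0 1)) (hw₂ : ContinuousOn w₂ (Icc 0 1))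
    {B : ℝ} (hB₁ : ∀ s ∈ Icc (0:ℝ) 1, |w₁ s| ≤ B) (hB₂ : ∀ s ∈ Icc (0:ℝ) 1, |w₂ s| ≤ B)
    {ε' : ℝ} (hε' : 0 ≤ ε') (hd : ∀ s ∈ Ioo (0:ℝ) 1, |w₁ s - w₂ s| ≤ ε') :
    |(∫ s in Ioc (0:ℝ) 1, Hker α lam t s * w₁ s) - ∫ s in Ioc (0:ℝ) 1, Hker α lam t s * w₂ s|
      ≤ M * ε' * ∫ s in Ioc (0:ℝ) 1, phiw α s := by
  have hi1 := integrable_HW hbnd hα1 hα2 hM ht hw₁ hB₁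
  have hi2 := integrable_HW hbnd hα1 hα2 hM ht hw₂ hB₂
  rw [← integral_sub hi1 hi2]
  calc |∫ s in Ioc (0:ℝ) 1, (Hker α lam t s * w₁ s - Hker α lam t s * w₂ s)|
      ≤ ∫ s in Ioc (0:ℝ) 1, |Hker α lam t s * w₁ s - Hker α lam t s * w₂ s| := by
        simpa [Real.norm_eq_abs] using norm_integral_le_integral_norm
          (μ := volume.restrict (Ioc (0:ℝ) 1))
          (fun s => Hker α lam t s * w₁ s - Hker α lam t s * w₂ s)
    _ ≤ ∫ s in Ioc (0:ℝ) 1, (M * ε') * phiw α s := by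
        apply integral_mono_ae ((hi1.sub hi2).abs) ((phiw_integrable hα1).const_mul (M * ε'))
        filter_upwards [ae_Ioo01] with s hs
        have h1 := (hbnd s hs).1 t ht
        have hphi := (phiw_pos (α := α) hs).le
        calc |Hker α lam t s * w₁ s - Hker α lam t s * w₂ s|
            = Hker α lam t s * |w₁ s - w₂ s| := by
              rw [← mul_sub, abs_mul, abs_of_nonneg h1.1]
          _ ≤ (M * phiw α s) * ε' := mul_le_mul h1.2 (hd s hs) (abs_nonneg _) (by positivity)
          _ = (M * ε') * phiw α s := by ring
    _ = (M * ε') * ∫ s in Ioc (0:ℝ) 1, phiw α s := integral_const_mul _ _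

omit hbnd in
lemma integral_phiW_le (hα1 : 1 < α)
    {w : ℝ → ℝ} (hw : ContinuousOn w (Icc 0 1)) {B : ℝ} (hB : ∀ s ∈ Icc (0:ℝ) 1, |w s| ≤ B) :
    ∫ s in Ioc (0:ℝ) 1, phiw α s * w s ≤ B * ∫ s in Ioc (0:ℝ) 1, phiw α s := by
  rw [← integral_const_mul]
  apply integral_mono_ae (integrable_phiW hα1 hw hB) ((phiw_integrable hα1).const_mul B)
  filter_upwards [ae_restrict_mem measurableSet_Ioc] with s hs
  have h0 := phiw_nonneg (α := α) hs
  have h2 : w s ≤ B := le_trans (le_abs_self _) (hB s ⟨hs.1.le, hs.2⟩)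
  calc phiw α s * w s ≤ phiw α s * B := mul_le_mul_of_nonneg_left h2 h0
    _ = B * phiw α s := mul_comm _ _

end Core

lemma cone_vw {α M : ℝ} {m u : ℝ → ℝ} {f : ℝ → ℝ → ℝ} (hα1 : 1 < α) (hM : 0 < M)
    (hmpos : ∀ t ∈ Set.Ioc (0:ℝ) 1, 0 < m t)
    (hfc : ContinuousOn (fun p : ℝ × ℝ => f p.1 p.2) (Set.Icc 0 1 ×ˢ Set.Ici 0))
    (hfpos : ∀ t ∈ Set.Icc (0:ℝ) 1, ∀ x : ℝ, 0 ≤ x → 0 ≤ f t x)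
    (hu : u ∈ coneP α (fun t => t ^ (α - 2) * m t / M)) :
    ∃ v : ℝ → ℝ, ContinuousOn v (Icc 0 1) ∧ (∀ s ∈ Ioc (0:ℝ) 1, v s = s ^ (2-α) * u s) ∧
      (∀ s ∈ Icc (0:ℝ) 1, 0 ≤ v s ∧ v s ≤ norm2ma α u) ∧
      ContinuousOn (fun s => f s (v s)) (Icc 0 1) ∧
      (∀ s ∈ Icc (0:ℝ) 1, 0 ≤ f s (v s)) := by
  obtain ⟨v, hv, heq, hvb⟩ := cone_ext hα1 hM hmpos hu
  refine ⟨v, hv, heq, hvb, ?_, fun s hs => hfpos s hs _ (hvb s hs).1⟩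
  exact hfc.comp (continuousOn_id.prodMk hv) (fun s (hs : s ∈ Icc (0:ℝ) 1) =>
    show (id s, v s) ∈ Icc (0:ℝ) 1 ×ˢ Ici (0:ℝ) from ⟨hs, (hvb s hs).1⟩)


lemma floor_approx {x C ε4 : ℝ} (hx0 : 0 ≤ x) (hxC : x ≤ C) (hε40 : 0 < ε4) {K : ℕ}
    (hK : C / ε4 ≤ (K:ℝ)) :
    |x - ((min K ⌊x / ε4⌋₊ : ℕ) : ℝ) * ε4| ≤ ε4 := by
  have hxK : x / ε4 ≤ (K:ℝ) := le_trans (by gcongr) hK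
  have hflK : ⌊x / ε4⌋₊ ≤ K := by
    calc ⌊x / ε4⌋₊ ≤ ⌊(K:ℝ)⌋₊ := Nat.floor_le_floor hxK
      _ = K := Nat.floor_natCast K
  rw [min_eq_right hflK]
  have hfl_le : (⌊x / ε4⌋₊ : ℝ) * ε4 ≤ x := by
    have h := Nat.floor_le (by positivity : (0:ℝ) ≤ x / ε4)
    calc (⌊x/ε4⌋₊ : ℝ) * ε4 ≤ (x/ε4) * ε4 := by gcongr
      _ = x := by field_simp
  have hfl_gt : x < ((⌊x / ε4⌋₊ : ℝ) + 1) * ε4 := by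
    have h := Nat.lt_floor_add_one (x / ε4)
    calc x = (x/ε4) * ε4 := by field_simp
      _ < ((⌊x/ε4⌋₊:ℝ)+1)*ε4 := by gcongr
  rw [abs_of_nonneg (by linarith)]
  nlinarith

lemma idx_approx {t : ℝ} {n : ℕ} (hn : 0 < (n:ℝ)) (ht0 : 0 ≤ t) (ht1 : t ≤ 1) :
    ((min n ⌊t * (n:ℝ)⌋₊ : ℕ) : ℝ) / (n:ℝ) ∈ Icc (0:ℝ) 1 ∧
    |t - ((min n ⌊t * (n:ℝ)⌋₊ : ℕ) : ℝ) / (n:ℝ)| ≤ 1 / (n:ℝ) := by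
  have hmin : min n ⌊t * (n:ℝ)⌋₊ = ⌊t * (n:ℝ)⌋₊ := by
    apply min_eq_right
    calc ⌊t * (n:ℝ)⌋₊ ≤ ⌊(n:ℝ)⌋₊ := Nat.floor_le_floor (by nlinarith)
      _ = n := Nat.floor_natCast n
  rw [hmin]
  have h1 : ((⌊t * (n:ℝ)⌋₊ : ℕ) : ℝ) ≤ t * n := Nat.floor_le (by positivity)
  have h2 : t * n < ((⌊t * (n:ℝ)⌋₊ : ℕ) : ℝ) + 1 := Nat.lt_floor_add_one _
  constructor
  · constructor
    · positivity
    · rw [div_le_one hn]; nlinarith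
  · rw [abs_of_nonneg (by rw [sub_nonneg, div_le_iff₀ hn]; linarith)]
    rw [sub_le_iff_le_add, ← add_div, le_div_iff₀ hn]
    linarith

/-- The operator `T` maps the cone `P_{u₀}` (with `u₀(t) = t^{α-2} m(t)/M`) into itself,
is continuous on `P_{u₀}`, and maps bounded subsets of `P_{u₀}` into relatively compact
(i.e. totally bounded) subsets of `C_{2-α}(I)`. -/
theorem stmt11 (α lam lam1 : ℝ) (hα1 : 1 < α) (hα2 : α ≤ 2)
    (hlam1 : IsGreatest {μ : ℝ | ML α (α - 1) μ = 0} lam1) (hlam : lam1 < lam)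
    (f : ℝ → ℝ → ℝ)
    (hfc : ContinuousOn (fun p : ℝ × ℝ => f p.1 p.2) (Set.Icc 0 1 ×ˢ Set.Ici 0))
    (hfpos : ∀ t ∈ Set.Icc (0:ℝ) 1, ∀ x : ℝ, 0 ≤ x → 0 ≤ f t x)
    (M : ℝ) (hM : 0 < M) (m : ℝ → ℝ) (hm : ContinuousOn m (Set.Icc 0 1))
    (hm0 : m 0 = 0) (hmpos : ∀ t ∈ Set.Ioc (0:ℝ) 1, 0 < m t)
    (hmM : ∀ t ∈ Set.Ioo (0:ℝ) 1, ∀ s ∈ Set.Ioo (0:ℝ) 1,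
      m t ≤ t ^ (2 - α) * greenG α lam t s / (s * (1 - s) ^ (α - 2)) ∧
      t ^ (2 - α) * greenG α lam t s / (s * (1 - s) ^ (α - 2)) ≤ M) :
    (∀ u ∈ coneP α (fun t => t ^ (α - 2) * m t / M),
        Tint α lam f u ∈ coneP α (fun t => t ^ (α - 2) * m t / M)) ∧
    (∀ u ∈ coneP α (fun t => t ^ (α - 2) * m t / M), ∀ ε > (0:ℝ), ∃ δ > (0:ℝ),
        ∀ v ∈ coneP α (fun t => t ^ (α - 2) * m t / M),
          norm2ma α (u - v) < δ → norm2ma α (Tint α lam f u - Tint α lam f v) < ε) ∧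
    (∀ R > (0:ℝ), ∀ ε > (0:ℝ), ∃ F : Finset (ℝ → ℝ),
        ∀ u ∈ coneP α (fun t => t ^ (α - 2) * m t / M), norm2ma α u ≤ R →
          ∃ g ∈ F, norm2ma α (Tint α lam f u - g) < ε) := by
  have hbnd := hker_bounds hα1 hα2 hM hm hmpos hmM
  have hid : ∀ t : ℝ, 0 < t → t ^ (α-2) * t ^ (2-α) = 1 := by
    intro t ht
    have he : α - 2 + (2 - α) = 0 := by ring
    rw [← Real.rpow_add ht, he, Real.rpow_zero]
  refine ⟨?_, ?_, ?_⟩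
  · -- Part 1: T maps the cone into itself
    intro u hu
    obtain ⟨v, hv, heq, hvb, hwc, hw0⟩ := cone_vw hα1 hM hmpos hfc hfpos hu
    obtain ⟨B, hB⟩ := isCompact_Icc.exists_bound_of_continuousOn hwc
    have hBa : ∀ s ∈ Icc (0:ℝ) 1, |(fun s => f s (v s)) s| ≤ B := by
      intro s hs; simpa [Real.norm_eq_abs] using hB s hs
    set w : ℝ → ℝ := fun s => f s (v s) with hwdef
    set J := ∫ s in Ioc (0:ℝ) 1, phiw α s * w s with hJdef
    have hJ0 : 0 ≤ J := integral_phiW_nonneg hw0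
    have hTn : ∀ t, Tint α lam f u t = ∫ s in Ioc (0:ℝ) 1, greenG α lam t s * w s :=
      tint_eq_w hα1 heq
    have hscale : ∀ t, t ^ (2-α) * Tint α lam f u t
        = ∫ s in Ioc (0:ℝ) 1, Hker α lam t s * w s := by
      intro t; rw [hTn t, ← hw_scale]
    have hup : ∀ t ∈ Icc (0:ℝ) 1, ∫ s in Ioc (0:ℝ) 1, Hker α lam t s * w s ≤ M * J :=
      fun t ht => integral_HW_upper hbnd hα1 hα2 hM ht hwc hBa hw0
    have hnn : ∀ t ∈ Icc (0:ℝ) 1, 0 ≤ ∫ s in Ioc (0:ℝ) 1, Hker α lam t s * w s :=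
      fun t ht => integral_HW_nonneg hbnd hα1 hα2 hM ht hw0
    have hnorm : norm2ma α (Tint α lam f u) ≤ M * J := by
      apply norm2ma_le (by positivity)
      intro t ht
      calc t^(2-α) * |Tint α lam f u t| = |t^(2-α) * Tint α lam f u t| := by
            rw [abs_mul, abs_of_nonneg (Real.rpow_nonneg ht.1 _)]
        _ = |∫ s in Ioc (0:ℝ) 1, Hker α lam t s * w s| := by rw [hscale t]
        _ = ∫ s in Ioc (0:ℝ) 1, Hker α lam t s * w s := abs_of_nonneg (hnn t ht)
        _ ≤ M * J := hup t ht
    refine ⟨⟨fun t => ∫ s in Ioc (0:ℝ) 1, Hker α lam t s * w s,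
        hfun_cont hbnd hα1 hα2 hM hwc hBa, fun t _ => (hscale t).symm⟩, ?_⟩
    intro t ht
    show t ^ (α - 2) * m t / M * norm2ma α (Tint α lam f u) ≤ Tint α lam f u t
    have hrp : 0 ≤ t ^ (α-2) := Real.rpow_nonneg ht.1.le _
    have hmt : 0 ≤ m t := (hmpos t ht).le
    have h1 : t ^ (α - 2) * m t / M * norm2ma α (Tint α lam f u)
        ≤ t ^ (α - 2) * m t / M * (M * J) := by
      apply mul_le_mul_of_nonneg_left hnorm
      positivity
    have hMne : M ≠ 0 := ne_of_gt hM
    have h2 : t^(α-2) * m t / M * (M * J) = t^(α-2) * (m t * J) := by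
      field_simp
    have h3 : m t * J ≤ t^(2-α) * Tint α lam f u t := by
      rw [hscale t]
      exact integral_HW_lower hbnd hα1 hα2 hM ht hwc hBa hw0
    calc t ^ (α - 2) * m t / M * norm2ma α (Tint α lam f u)
        ≤ t^(α-2) * (m t * J) := by rw [← h2]; exact h1
      _ ≤ t^(α-2) * (t^(2-α) * Tint α lam f u t) := mul_le_mul_of_nonneg_left h3 hrp
      _ = (t^(α-2) * t^(2-α)) * Tint α lam f u t := by ring
      _ = Tint α lam f u t := by rw [hid t ht.1, one_mul]
  · -- Part 2: continuity
    intro u hu ε hε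
    obtain ⟨v₁, hv₁, heq₁, hvb₁, hwc₁, hw0₁⟩ := cone_vw hα1 hM hmpos hfc hfpos hu
    have hJ0' : 0 ≤ ∫ s in Ioc (0:ℝ) 1, phiw α s :=
      setIntegral_nonneg measurableSet_Ioc fun s hs => phiw_nonneg hs
    set J₀ := ∫ s in Ioc (0:ℝ) 1, phiw α s with hJ₀def
    set r := norm2ma α u + 1 with hrdef
    have hfcK : ContinuousOn (fun p : ℝ × ℝ => f p.1 p.2) (Icc 0 1 ×ˢ Icc 0 r) :=
      hfc.mono (Set.prod_mono_right Icc_subset_Ici_self)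
    have huc := (isCompact_Icc.prod isCompact_Icc).uniformContinuousOn_of_continuous hfcK
    rw [Metric.uniformContinuousOn_iff] at huc
    set ε' := ε / (2 * (M * J₀ + 1)) with hε'def
    have hden : 0 < 2 * (M * J₀ + 1) := by positivity
    have hε'0 : 0 < ε' := by rw [hε'def]; exact div_pos hε hden
    obtain ⟨δf, hδf, hucf⟩ := huc ε' hε'0
    refine ⟨min δf 1, by positivity, ?_⟩
    intro vf hvf hdiff
    obtain ⟨v₂, hv₂, heq₂, hvb₂, hwc₂, hw0₂⟩ := cone_vw hα1 hM hmpos hfc hfpos hvf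
    obtain ⟨B₁, hB₁'⟩ := isCompact_Icc.exists_bound_of_continuousOn hwc₁
    obtain ⟨B₂, hB₂'⟩ := isCompact_Icc.exists_bound_of_continuousOn hwc₂
    set B := max B₁ B₂ with hBdef
    have hB₁ : ∀ s ∈ Icc (0:ℝ) 1, |(fun s => f s (v₁ s)) s| ≤ B := fun s hs =>
      le_trans (by simpa [Real.norm_eq_abs] using hB₁' s hs) (le_max_left _ _)
    have hB₂ : ∀ s ∈ Icc (0:ℝ) 1, |(fun s => f s (v₂ s)) s| ≤ B := fun s hs =>
      le_trans (by simpa [Real.norm_eq_abs] using hB₂' s hs) (le_max_right _ _)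
    have hww : ∀ s ∈ Ioo (0:ℝ) 1, |f s (v₁ s) - f s (v₂ s)| ≤ ε' := by
      intro s hs
      have hsIoc : s ∈ Ioc (0:ℝ) 1 := Ioo_subset_Ioc_self hs
      have hsIcc : s ∈ Icc (0:ℝ) 1 := ⟨hs.1.le, hs.2.le⟩
      have hmem₁ : ((s, v₁ s) : ℝ × ℝ) ∈ Icc (0:ℝ) 1 ×ˢ Icc (0:ℝ) r :=
        ⟨hsIcc, ⟨(hvb₁ s hsIcc).1, le_trans (hvb₁ s hsIcc).2 (by rw [hrdef]; linarith)⟩⟩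
      have hnv : norm2ma α vf ≤ norm2ma α u + norm2ma α (u - vf) := norm2ma_triangle hu.1 hvf.1
      have hd1lt : norm2ma α (u - vf) < 1 := lt_of_lt_of_le hdiff (min_le_right _ _)
      have hmem₂ : ((s, v₂ s) : ℝ × ℝ) ∈ Icc (0:ℝ) 1 ×ˢ Icc (0:ℝ) r := by
        refine ⟨hsIcc, ⟨(hvb₂ s hsIcc).1, ?_⟩⟩
        have h2 := (hvb₂ s hsIcc).2
        rw [hrdef]; linarith
      have hd1 : dist (v₁ s) (v₂ s) ≤ norm2ma α (u - vf) := by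
        rw [Real.dist_eq, heq₁ s hsIoc, heq₂ s hsIoc]
        have he : s^(2-α) * u s - s^(2-α) * vf s = s^(2-α) * (u s - vf s) := by ring
        rw [he, abs_mul, abs_of_nonneg (Real.rpow_nonneg hs.1.le _)]
        have := norm2ma_ge (inc2ma_sub hu.1 hvf.1) s hsIcc
        simpa [Pi.sub_apply] using this
      have hdlt : dist (v₁ s) (v₂ s) < δf :=
        lt_of_le_of_lt hd1 (lt_of_lt_of_le hdiff (min_le_left _ _))
      have hdist : dist ((s, v₁ s) : ℝ × ℝ) ((s, v₂ s) : ℝ × ℝ) < δf := by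
        rw [Prod.dist_eq]
        calc max (dist s s) (dist (v₁ s) (v₂ s)) = max 0 (dist (v₁ s) (v₂ s)) := by
              rw [dist_self]
          _ < δf := max_lt hδf hdlt
      have := hucf (s, v₁ s) hmem₁ (s, v₂ s) hmem₂ hdist
      rw [Real.dist_eq] at this
      exact le_of_lt this
    have hsc₁ : ∀ t, t^(2-α) * Tint α lam f u t
        = ∫ s in Ioc (0:ℝ) 1, Hker α lam t s * f s (v₁ s) := by
      intro t; rw [tint_eq_w hα1 heq₁ t, ← hw_scale]
    have hsc₂ : ∀ t, t^(2-α) * Tint α lam f vf t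
        = ∫ s in Ioc (0:ℝ) 1, Hker α lam t s * f s (v₂ s) := by
      intro t; rw [tint_eq_w hα1 heq₂ t, ← hw_scale]
    have hbound : ∀ t ∈ Icc (0:ℝ) 1,
        t^(2-α) * |(Tint α lam f u - Tint α lam f vf) t| ≤ M * ε' * J₀ := by
      intro t ht
      rw [Pi.sub_apply]
      calc t^(2-α) * |Tint α lam f u t - Tint α lam f vf t|
          = |t^(2-α) * Tint α lam f u t - t^(2-α) * Tint α lam f vf t| := by
            rw [← mul_sub, abs_mul, abs_of_nonneg (Real.rpow_nonneg ht.1 (2-α))]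
        _ = |(∫ s in Ioc (0:ℝ) 1, Hker α lam t s * f s (v₁ s))
              - ∫ s in Ioc (0:ℝ) 1, Hker α lam t s * f s (v₂ s)| := by
            rw [hsc₁ t, hsc₂ t]
        _ ≤ M * ε' * J₀ :=
            integral_HW_diff hbnd hα1 hα2 hM ht hwc₁ hwc₂ hB₁ hB₂ hε'0.le hww
    have hfin : M * ε' * J₀ < ε := by
      rw [hε'def]
      have he : M * (ε / (2*(M*J₀+1))) * J₀ = ε * (M*J₀) / (2*(M*J₀+1)) := by ring
      rw [he, div_lt_iff₀ hden]
      nlinarith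
    have hnonneg : 0 ≤ M * ε' * J₀ := mul_nonneg (mul_nonneg hM.le hε'0.le) hJ0'
    exact lt_of_le_of_lt (norm2ma_le hnonneg hbound) hfin
  · -- Part 3: total boundedness
    classical
    intro R hR ε hε
    have hfcR : ContinuousOn (fun p : ℝ × ℝ => f p.1 p.2) (Icc 0 1 ×ˢ Icc 0 R) :=
      hfc.mono (Set.prod_mono_right Icc_subset_Ici_self)
    obtain ⟨B₀, hB₀⟩ := (isCompact_Icc.prod isCompact_Icc).exists_bound_of_continuousOn hfcR
    set B := max B₀ 1 with hBdef
    have hB0 : (0:ℝ) < B := lt_of_lt_of_le one_pos (le_max_right _ _)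
    set J₀ := ∫ s in Ioc (0:ℝ) 1, phiw α s with hJ₀def
    have hJ0' : 0 ≤ J₀ := setIntegral_nonneg measurableSet_Ioc fun s hs => phiw_nonneg hs
    set C := M * B * J₀ with hCdef
    have hC0 : 0 ≤ C := by rw [hCdef]; exact mul_nonneg (mul_nonneg hM.le hB0.le) hJ0'
    set ε4 := ε / 4 with hε4def
    have hε40 : 0 < ε4 := by rw [hε4def]; positivity
    obtain ⟨δ, hδ, hΦ⟩ := phi_equicont hbnd hα1 hα2 hM (ε4 / B) (by positivity)
    obtain ⟨n₀, hn₀⟩ := exists_nat_gt (1/δ)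
    set n := n₀ + 1 with hndef
    have hnpos : (0:ℝ) < (n:ℝ) := by rw [hndef]; positivity
    have hn : 1/(n:ℝ) < δ := by
      have h1 : 1/δ < (n:ℝ) := lt_of_lt_of_le hn₀ (by rw [hndef]; push_cast; linarith)
      have h2 := one_div_lt_one_div_of_lt (by positivity : (0:ℝ) < 1/δ) h1
      rwa [one_div_one_div] at h2
    set K := ⌈C/ε4⌉₊ with hKdef
    set idx : ℝ → Fin (n+1) :=
      fun t => ⟨min n ⌊t * (n:ℝ)⌋₊, Nat.lt_succ_of_le (min_le_left _ _)⟩ with hidxdef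
    set gfun : (Fin (n+1) → Fin (K+1)) → (ℝ → ℝ) := fun ι => fun t : ℝ =>
      if t = 0 then 0 else t^(α-2) * (((ι (idx t) : ℕ) : ℝ) * ε4) with hgdef
    refine ⟨Finset.image gfun Finset.univ, ?_⟩
    intro u hu hnorm
    obtain ⟨v, hv, heq, hvb, hwc, hw0⟩ := cone_vw hα1 hM hmpos hfc hfpos hu
    have hBa : ∀ s ∈ Icc (0:ℝ) 1, |(fun s => f s (v s)) s| ≤ B := by
      intro s hs
      have hmem : ((s, v s) : ℝ × ℝ) ∈ Icc (0:ℝ) 1 ×ˢ Icc (0:ℝ) R :=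
        ⟨hs, ⟨(hvb s hs).1, le_trans (hvb s hs).2 hnorm⟩⟩
      exact le_trans (by simpa [Real.norm_eq_abs] using hB₀ _ hmem) (le_max_left _ _)
    set h : ℝ → ℝ := fun t => ∫ s in Ioc (0:ℝ) 1, Hker α lam t s * f s (v s) with hhdef
    have hhub : ∀ t ∈ Icc (0:ℝ) 1, 0 ≤ h t ∧ h t ≤ C := by
      intro t ht
      constructor
      · exact integral_HW_nonneg hbnd hα1 hα2 hM ht hw0
      · calc h t ≤ M * ∫ s in Ioc (0:ℝ) 1, phiw α s * f s (v s) :=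
              integral_HW_upper hbnd hα1 hα2 hM ht hwc hBa hw0
          _ ≤ M * (B * J₀) := mul_le_mul_of_nonneg_left (integral_phiW_le hα1 hwc hBa) hM.le
          _ = C := by rw [hCdef]; ring
    have hscale : ∀ t, t^(2-α) * Tint α lam f u t = h t := by
      intro t; rw [tint_eq_w hα1 heq t, hhdef, ← hw_scale]
    set ι : Fin (n+1) → Fin (K+1) := fun i =>
      ⟨min K ⌊h ((i:ℝ)/(n:ℝ)) / ε4⌋₊, Nat.lt_succ_of_le (min_le_left _ _)⟩ with hιdef
    refine ⟨gfun ι, Finset.mem_image.2 ⟨ι, Finset.mem_univ _, rfl⟩, ?_⟩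
    have hgrid : ∀ i : Fin (n+1), (i:ℝ)/(n:ℝ) ∈ Icc (0:ℝ) 1 := by
      intro i
      constructor
      · positivity
      · rw [div_le_one hnpos]
        have hle : (i:ℕ) ≤ n := Nat.lt_succ_iff.1 i.2
        exact_mod_cast hle
    have hKC : C / ε4 ≤ (K:ℝ) := by rw [hKdef]; exact Nat.le_ceil _
    have hclaim1 : ∀ i : Fin (n+1), |h ((i:ℝ)/(n:ℝ)) - ((ι i : ℕ) : ℝ) * ε4| ≤ ε4 := by
      intro i
      obtain ⟨hx0, hxC⟩ := hhub _ (hgrid i)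
      have := floor_approx hx0 hxC hε40 hKC
      exact this
    have hbound : ∀ t ∈ Icc (0:ℝ) 1,
        t^(2-α) * |(Tint α lam f u - gfun ι) t| ≤ ε4 + ε4 := by
      intro t ht
      rw [Pi.sub_apply]
      rcases eq_or_lt_of_le ht.1 with h0 | h0
      · rw [← h0, tint_zero hα1 f u]
        have hg0 : gfun ι (0:ℝ) = 0 := by rw [hgdef]; simp
        rw [hg0]
        simp only [sub_zero, abs_zero, mul_zero]
        positivity
      · have hgt : gfun ι t = t^(α-2) * (((ι (idx t) : ℕ) : ℝ) * ε4) := by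
          rw [hgdef]; simp [ne_of_gt h0]
        have hti : ((idx t : ℕ) : ℝ)/(n:ℝ) ∈ Icc (0:ℝ) 1 := hgrid (idx t)
        have hidxval : ((idx t : ℕ) : ℝ) = ((min n ⌊t * (n:ℝ)⌋₊ : ℕ) : ℝ) := by
          rw [hidxdef]
        have hclose : |t - ((idx t : ℕ) : ℝ)/(n:ℝ)| < δ := by
          rw [hidxval]
          exact lt_of_le_of_lt (idx_approx hnpos ht.1 ht.2).2 hn
        have hdiffh : |h t - h (((idx t : ℕ) : ℝ)/(n:ℝ))| ≤ ε4 := by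
          have h1 := integral_HW_tdiff hbnd hα1 hα2 hM ht hti hwc hBa
          have h2 := hΦ t ht (((idx t : ℕ) : ℝ)/(n:ℝ)) hti hclose
          calc |h t - h (((idx t : ℕ) : ℝ)/(n:ℝ))|
              ≤ B * ∫ s in Ioc (0:ℝ) 1,
                  |Hker α lam t s - Hker α lam (((idx t : ℕ) : ℝ)/(n:ℝ)) s| := h1
            _ ≤ B * (ε4/B) := mul_le_mul_of_nonneg_left h2.le hB0.le
            _ = ε4 := by field_simp
        calc t^(2-α) * |Tint α lam f u t - gfun ι t|
            = |t^(2-α) * Tint α lam f u t - t^(2-α) * gfun ι t| := by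
              rw [← mul_sub, abs_mul, abs_of_nonneg (Real.rpow_nonneg ht.1 (2-α))]
          _ = |h t - ((ι (idx t) : ℕ) : ℝ) * ε4| := by
              rw [hscale t, hgt]
              congr 1
              rw [← mul_assoc, mul_comm (t^(2-α)) (t^(α-2)), hid t h0, one_mul]
          _ ≤ |h t - h (((idx t : ℕ) : ℝ)/(n:ℝ))|
              + |h (((idx t : ℕ) : ℝ)/(n:ℝ)) - ((ι (idx t) : ℕ) : ℝ) * ε4| := abs_sub_le _ _ _
          _ ≤ ε4 + ε4 := add_le_add hdiffh (hclaim1 (idx t))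
    have hfin : norm2ma α (Tint α lam f u - gfun ι) ≤ ε4 + ε4 :=
      norm2ma_le (by positivity) hbound
    have hlt : ε4 + ε4 < ε := by rw [hε4def]; linarith
    linarith
end
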